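/- arXiv:2001.10067 — 10 statements merged into one kernel-verified Lean document; each statement's English description precedes it below -/
import Mathlib

section
/- Let q be a prime power, n ≥ 2, and s an integer with 1 ≤ s ≤ n-1 and gcd(s, n) = 1. Then the 𝔽_q-subspace U = {(x, x^{q^s}) : x ∈ 𝔽_{q^n}} of 𝔽_{q^n} × 𝔽_{q^n} is scattered, i.e., for every nonzero v ∈ U, the intersection of U with the 𝔽_{q^n}-span of v has 𝔽_q-dimension exactly 1. -/
/-! If `v = (x, x ^ q ^ s) ≠ 0` and `c • v ∈ U` for some `c : K`, comparing coordinates gives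
`c ^ q ^ s = c`. Since also `c ^ q ^ n = c` and `gcd(s, n) = 1`, the periodic points of
`c ↦ c ^ q` force `c ^ q = c`, i.e. `c ∈ 𝔽_q` (the Frobenius generates `Gal(K/𝔽_q)`). Hence
`U ∩ ⟨v⟩_K = 𝔽_q v`, which is one-dimensional. -/

open Function in
theorem pow_eq_self_of_pow_pow_eq_self_of_coprime {M : Type*} [Monoid M] {x : M} {q s n : ℕ}
    (hs : x ^ q ^ s = x) (hn : x ^ q ^ n = x) (hsn : Nat.Coprime s n) : x ^ q = x := by
  have hs' : IsPeriodicPt (· ^ q) s x := by simpa [IsPeriodicPt, IsFixedPt, pow_iterate] using hs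
  have hn' : IsPeriodicPt (· ^ q) n x := by simpa [IsPeriodicPt, IsFixedPt, pow_iterate] using hn
  simpa [IsPeriodicPt, IsFixedPt, hsn.gcd_eq_one] using hs'.gcd hn'

theorem FiniteField.mem_range_algebraMap_of_pow_card_eq_self {F L : Type*} [Field F] [Fintype F]
    [Field L] [Finite L] [Algebra F L] {x : L} (hx : x ^ Fintype.card F = x) :
    x ∈ Set.range (algebraMap F L) := by
  rw [← IntermediateField.mem_bot, IsGalois.mem_bot_iff_fixed]
  intro σ
  obtain ⟨k, rfl⟩ := (bijective_frobeniusAlgEquivOfAlgebraic_pow F L).2 σ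
  rw [AlgEquiv.coe_pow]
  exact Function.iterate_fixed hx k

theorem Submodule.inf_restrictScalars_span_singleton_eq_span {R K V : Type*} [CommSemiring R]
    [Semiring K] [Algebra R K] [AddCommMonoid V] [Module K V] [Module R V] [IsScalarTower R K V]
    (U : Submodule R V) {v : V} (hv : v ∈ U)
    (h : ∀ c : K, c • v ∈ U → c ∈ Set.range (algebraMap R K)) :
    U ⊓ (span K {v}).restrictScalars R = span R {v} := by
  refine le_antisymm ?_ (span_le.2 <| Set.singleton_subset_iff.2 ⟨hv, subset_span rfl⟩)
  rintro _ ⟨hw, hspan⟩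
  obtain ⟨c, rfl⟩ := mem_span_singleton.1 hspan
  obtain ⟨r, rfl⟩ := h c hw
  exact mem_span_singleton.2 ⟨r, (algebraMap_smul K r v).symm⟩

theorem pow_eq_self_of_smul_mk_pow_eq_mk_pow {K : Type*} [Field K] {m : ℕ} {x y c : K} (hx : x ≠ 0)
    (h : c • (x, x ^ m) = (y, y ^ m)) : c ^ m = c := by
  obtain ⟨rfl, hy⟩ := Prod.ext_iff.1 h
  simp only [smul_eq_mul, Prod.smul_mk, mul_pow] at hy
  exact mul_right_cancel₀ (pow_ne_zero m hx) hy.symm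

theorem pseudoregulus_subspace_scattered_general
    (q n s : ℕ) (hgcd : Nat.gcd s n = 1)
    (Fq K : Type*) [Field Fq] [Field K] [Fintype Fq] [Fintype K] [Algebra Fq K]
    (hq : Fintype.card Fq = q) (hK : Fintype.card K = q ^ n)
    (U : Submodule Fq (K × K))
    (hU : (U : Set (K × K)) = {p | ∃ x : K, p = (x, x ^ q ^ s)}) :
    ∀ v ∈ U, v ≠ 0 →
      Module.finrank Fq
        ↥(U ⊓ (Submodule.span K {v}).restrictScalars Fq) = 1 := by
  have mem_U (p : K × K) : p ∈ U ↔ ∃ x : K, p = (x, x ^ q ^ s) := Set.ext_iff.1 hU p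
  intro v hv hv0
  obtain ⟨x, rfl⟩ := (mem_U v).1 hv
  have hx : x ≠ 0 := by
    rintro rfl
    exact hv0 (by simp [zero_pow (pow_ne_zero s (hq ▸ Fintype.card_ne_zero))])
  rw [U.inf_restrictScalars_span_singleton_eq_span hv, finrank_span_singleton hv0]
  intro c hc
  obtain ⟨y, hy⟩ := (mem_U _).1 hc
  have hcs : c ^ q ^ s = c := pow_eq_self_of_smul_mk_pow_eq_mk_pow hx hy
  have hcn : c ^ q ^ n = c := hK ▸ FiniteField.pow_card c
  exact FiniteField.mem_range_algebraMap_of_pow_card_eq_self <|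
    hq ▸ pow_eq_self_of_pow_pow_eq_self_of_coprime hcs hcn hgcd

/-- `U = {(x, x^{q^s})}` is a scattered `𝔽_q`-subspace of `𝔽_{q^n} × 𝔽_{q^n}`. -/
theorem pseudoregulus_subspace_scattered
    (q n s : ℕ) (hn : 2 ≤ n) (hs1 : 1 ≤ s) (hs2 : s ≤ n - 1) (hgcd : Nat.gcd s n = 1)
    (Fq K : Type*) [Field Fq] [Field K] [Fintype Fq] [Fintype K] [Algebra Fq K]
    (hq : Fintype.card Fq = q) (hK : Fintype.card K = q ^ n)
    (U : Submodule Fq (K × K))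
    (hU : (U : Set (K × K)) = {p | ∃ x : K, p = (x, x ^ q ^ s)}) :
    ∀ v ∈ U, v ≠ 0 →
      Module.finrank Fq
        ↥(U ⊓ (Submodule.span K {v}).restrictScalars Fq) = 1 :=
  pseudoregulus_subspace_scattered_general q n s hgcd Fq K hq hK U hU
end

section
/- Let C be a set of m × n matrices over 𝔽_q with m ≤ n, such that any two distinct elements of C differ by a matrix of rank at least d (1 ≤ d ≤ m). Then |C| ≤ q^{n(m-d+1)}. -/
/-!
Two codewords that agree outside a set of `d - 1` rows differ by a matrix with at most `d - 1`
nonzero rows, hence of rank less than `d`; so they are equal, and a code of minimum rank distance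
`d` embeds into the matrices with `d - 1` of their rows deleted.
-/

open Finset

namespace Matrix

variable {ι κ K : Type*} [Fintype ι] [Fintype κ] [Field K]

theorem injOn_rows_restrict_of_card_compl_lt [DecidableEq ι] {d : ℕ} {C : Set (Matrix ι κ K)}
    (hdist : ∀ A ∈ C, ∀ B ∈ C, A ≠ B → d ≤ (A - B).rank) {s : Finset ι}
    (hs : #sᶜ < d) : C.InjOn fun A (i : s) ↦ A i := by
  intro A hA B hB hAB
  by_contra hne
  have hsupp : Function.support (A - B).row ⊆ ↑sᶜ :=
    Function.support_subset_iff'.mpr fun i hi ↦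
      sub_eq_zero.mpr (congrFun hAB ⟨i, by simpa using hi⟩)
  have hrank_le : (A - B).rank ≤ #sᶜ := (A - B).rank_le_card_of_support_subset sᶜ hsupp
  have hrank_ge : d ≤ (A - B).rank := hdist A hA B hB hne
  omega

theorem ncard_le_card_pow_of_le_rank_sub [Fintype K] {d : ℕ} (hd1 : 1 ≤ d)
    (hd : d ≤ Fintype.card ι) {C : Set (Matrix ι κ K)}
    (hdist : ∀ A ∈ C, ∀ B ∈ C, A ≠ B → d ≤ (A - B).rank) :
    C.ncard ≤ Fintype.card K ^ (Fintype.card κ * (Fintype.card ι - d + 1)) := by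
  classical
  obtain ⟨t, -, ht⟩ : ∃ t ⊆ (univ : Finset ι), #t = d - 1 :=
    exists_subset_card_eq (by simp only [card_univ]; omega)
  have hinj := injOn_rows_restrict_of_card_compl_lt hdist (s := tᶜ) (by rw [compl_compl]; omega)
  calc C.ncard ≤ (Set.univ : Set (↥(tᶜ : Finset ι) → κ → K)).ncard :=
        Set.ncard_le_ncard_of_injOn _ (fun _ _ ↦ Set.mem_univ _) hinj
    _ = Fintype.card K ^ (Fintype.card κ * (Fintype.card ι - d + 1)) := by
        rw [Set.ncard_univ, Nat.card_eq_fintype_card, Fintype.card_fun, Fintype.card_fun,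
          ← pow_mul, Fintype.card_coe, card_compl, ht]
        congr 2
        omega

end Matrix

theorem singleton_bound_rank_metric_general
    (q m n d : ℕ) (hd1 : 1 ≤ d) (hdm : d ≤ m)
    (Fq : Type*) [Field Fq] [Fintype Fq] (hq : Fintype.card Fq = q)
    (C : Set (Matrix (Fin m) (Fin n) Fq))
    (hdist : ∀ A ∈ C, ∀ B ∈ C, A ≠ B → d ≤ (A - B).rank) :
    Set.ncard C ≤ q ^ (n * (m - d + 1)) := by
  subst hq
  simpa using Matrix.ncard_le_card_pow_of_le_rank_sub hd1 (by simpa using hdm) hdist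

/-- Singleton-like bound for rank metric codes. -/
theorem singleton_bound_rank_metric
    (q m n d : ℕ) (hmn : m ≤ n) (hd1 : 1 ≤ d) (hdm : d ≤ m)
    (Fq : Type*) [Field Fq] [Fintype Fq] (hq : Fintype.card Fq = q)
    (C : Set (Matrix (Fin m) (Fin n) Fq))
    (hdist : ∀ A ∈ C, ∀ B ∈ C, A ≠ B → d ≤ (A - B).rank) :
    Set.ncard C ≤ q ^ (n * (m - d + 1)) :=
  singleton_bound_rank_metric_general q m n d hd1 hdm Fq hq C hdist
end

section
/- Let C be an 𝔽_q-linear subspace of 𝔽_q^{m×n} with m ≤ n, such that every nonzero matrix in C has rank at least d, and suppose dim_{𝔽_q} C = n(m - d + 1) (i.e., C is an MRD-code). If d > 1, then the Delsarte dual code C^⊥ = {N ∈ 𝔽_q^{m×n} : Tr(M Nᵗ) = 0 for all M ∈ C} is an MRD-code of 𝔽_q-dimension mn - n(m-d+1), i.e., every nonzero matrix in C^⊥ has rank at least m - d + 2. -/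
/-!
For `N ∈ C⊥` of rank at most `k = m - d + 1`, factor `N = X Y` through `K^k` with `X` of full
column rank `k`. A matrix `M` with `Xᵀ M = 0` has rank at most `m - k < d`, so `M ↦ Xᵀ M` is
injective on `C`, and since `dim C = k n` it maps `C` onto all `k × n` matrices. As
`tr ((Xᵀ M) Yᵀ) = tr (M Nᵀ) = 0`, the matrix `Y` is orthogonal to everything, so `Y = 0` and
`N = 0`. The dimension of `C⊥` comes from the nondegeneracy of the trace form.
-/

open Module
open LinearMap (BilinForm)

theorem Submodule.exists_le_finrank_eq {K V : Type*} [Field K] [AddCommGroup V] [Module K V]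
    [FiniteDimensional K V] (p : Submodule K V) {k : ℕ} (hpk : finrank K p ≤ k)
    (hk : k ≤ finrank K V) : ∃ W : Submodule K V, p ≤ W ∧ finrank K W = k := by
  induction k, hpk using Nat.le_induction with
  | base => exact ⟨p, le_rfl, rfl⟩
  | succ k _ ih =>
    obtain ⟨W, hpW, hW⟩ := ih (by omega)
    obtain ⟨v, hv⟩ : ∃ v, v ∉ W := SetLike.exists_not_mem_of_ne_top W fun h => by
      rw [h, finrank_top] at hW
      omega
    exact ⟨W ⊔ span K {v}, hpW.trans le_sup_left, by rw [finrank_sup_span_singleton hv, hW]⟩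

namespace Matrix

theorem exists_mul_eq_of_rank_le {m n K : Type*} [Fintype m] [Fintype n] [Field K]
    (N : Matrix m n K) {k : ℕ} (hN : N.rank ≤ k) (hk : k ≤ Fintype.card m) :
    ∃ (X : Matrix m (Fin k) K) (Y : Matrix (Fin k) n K), X.rank = k ∧ X * Y = N := by
  classical
  obtain ⟨W, hNW, hW⟩ := (LinearMap.range N.mulVecLin).exists_le_finrank_eq hN (by simpa using hk)
  let e : W ≃ₗ[K] Fin k → K := LinearEquiv.ofFinrankEq _ _ (by simpa using hW)
  refine ⟨LinearMap.toMatrix' (W.subtype ∘ₗ e.symm.toLinearMap),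
    LinearMap.toMatrix' (e.toLinearMap ∘ₗ N.mulVecLin.codRestrict W fun v => hNW ⟨v, rfl⟩),
    ?_, ?_⟩
  · rw [rank, ← toLin'_apply', toLin'_toMatrix', LinearMap.finrank_range_of_inj]
    · exact finrank_fin_fun K
    · exact W.injective_subtype.comp e.symm.injective
  · apply toLin'.injective
    rw [toLin'_mul, toLin'_toMatrix', toLin'_toMatrix', toLin'_apply']
    exact LinearMap.ext fun v => by simp

section TraceForm

variable {l m n R : Type*} [Fintype l] [Fintype m] [Fintype n] [CommRing R]

def traceForm : BilinForm R (Matrix m n R) :=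
  LinearMap.mk₂ R (fun M N : Matrix m n R => trace (M * Nᵀ))
    (fun M M' N => by rw [Matrix.add_mul, trace_add])
    (fun c M N => by rw [Matrix.smul_mul, trace_smul])
    (fun M N N' => by rw [transpose_add, Matrix.mul_add, trace_add])
    (fun c M N => by rw [transpose_smul, Matrix.mul_smul, trace_smul])

@[simp]
theorem traceForm_apply (M N : Matrix m n R) : traceForm M N = trace (M * Nᵀ) := rfl

theorem traceForm_comm (M N : Matrix m n R) : traceForm M N = traceForm N M := by
  rw [traceForm_apply, ← trace_transpose, transpose_mul, transpose_transpose, traceForm_apply]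

theorem traceForm_transpose_mul_left (X : Matrix m l R) (M : Matrix m n R) (Y : Matrix l n R) :
    traceForm (Xᵀ * M) Y = traceForm M (X * Y) := by
  rw [traceForm_apply, traceForm_apply, Matrix.mul_assoc, trace_mul_comm, Matrix.mul_assoc,
    transpose_mul]

theorem traceForm_separatingRight : (traceForm : BilinForm R (Matrix m n R)).SeparatingRight :=
  fun N hN => by
    classical
    ext i j
    simpa [trace_single_mul] using hN (single i j 1)

theorem traceForm_nondegenerate : (traceForm : BilinForm R (Matrix m n R)).Nondegenerate :=
  ⟨fun M hM => traceForm_separatingRight M fun N => (traceForm_comm N M).trans (hM N),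
    traceForm_separatingRight⟩

end TraceForm

variable {m n K : Type*} [Fintype m] [Fintype n] [Field K]

theorem finrank_traceForm_orthogonal (C : Submodule K (Matrix m n K)) :
    finrank K (traceForm.orthogonal C) = Fintype.card m * Fintype.card n - finrank K C := by
  rw [BilinForm.finrank_orthogonal traceForm_nondegenerate, finrank_matrix, finrank_self, mul_one]

theorem lt_rank_of_mem_traceForm_orthogonal {k : ℕ} (hk : k ≤ Fintype.card m)
    {C : Submodule K (Matrix m n K)} (hC : ∀ M ∈ C, M ≠ 0 → Fintype.card m - k < M.rank)
    (hdim : finrank K C = k * Fintype.card n) {N : Matrix m n K}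
    (hN : N ∈ traceForm.orthogonal C) (hN0 : N ≠ 0) : k < N.rank := by
  by_contra! hNk
  obtain ⟨X, Y, hX, rfl⟩ := exists_mul_eq_of_rank_le N hNk hk
  let f : C →ₗ[K] Matrix (Fin k) n K := mulLeftLinearMap n K Xᵀ ∘ₗ C.subtype
  have hf : Function.Injective f := by
    rw [← LinearMap.ker_eq_bot, LinearMap.ker_eq_bot']
    rintro ⟨M, hM⟩ hXM
    replace hXM : Xᵀ * M = 0 := hXM
    by_contra hM0
    have hrank := rank_add_rank_le_card_of_mul_eq_zero hXM
    rw [rank_transpose, hX] at hrank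
    have hMrank := hC M hM (by simpa using hM0)
    omega
  have hf_surj : Function.Surjective f :=
    (LinearMap.injective_iff_surjective_of_finrank_eq_finrank
      (by rw [hdim, finrank_matrix, finrank_self, mul_one, Fintype.card_fin])).mp hf
  have hY : Y = 0 := traceForm_separatingRight Y fun B => by
    obtain ⟨⟨M, hM⟩, rfl⟩ := hf_surj B
    exact (traceForm_transpose_mul_left X M Y).trans (hN M hM)
  exact hN0 (by rw [hY, Matrix.mul_zero])

end Matrix

theorem delsarte_dual_MRD_general
    (m n d : ℕ) (hd1 : 1 < d) (hdm : d ≤ m)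
    (Fq : Type*) [Field Fq]
    (C : Submodule Fq (Matrix (Fin m) (Fin n) Fq))
    (hrank : ∀ M ∈ C, M ≠ 0 → d ≤ Matrix.rank M)
    (hdimC : Module.finrank Fq C = n * (m - d + 1))
    (Cperp : Submodule Fq (Matrix (Fin m) (Fin n) Fq))
    (hCperp : (Cperp : Set (Matrix (Fin m) (Fin n) Fq))
        = {N | ∀ M ∈ C, Matrix.trace (M * Matrix.transpose N) = 0}) :
    Module.finrank Fq Cperp = m * n - n * (m - d + 1) ∧
      ∀ N ∈ Cperp, N ≠ 0 → m - d + 2 ≤ Matrix.rank N := by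
  obtain rfl : Cperp = Matrix.traceForm.orthogonal C := SetLike.coe_injective hCperp
  refine ⟨?_, fun N hN hN0 => ?_⟩
  · rw [Matrix.finrank_traceForm_orthogonal, hdimC, Fintype.card_fin, Fintype.card_fin]
  · have hNrank := Matrix.lt_rank_of_mem_traceForm_orthogonal (k := m - d + 1)
      (by rw [Fintype.card_fin]; omega)
      (fun M hM hM0 => by have := hrank M hM hM0; rw [Fintype.card_fin]; omega)
      (by rw [hdimC, Fintype.card_fin, mul_comm]) hN hN0
    omega

/-- Delsarte: the dual of a linear MRD-code is MRD. -/
theorem delsarte_dual_MRD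
    (q m n d : ℕ) (hmn : m ≤ n) (hd1 : 1 < d) (hdm : d ≤ m)
    (Fq : Type*) [Field Fq] [Fintype Fq] (hq : Fintype.card Fq = q)
    (C : Submodule Fq (Matrix (Fin m) (Fin n) Fq))
    (hrank : ∀ M ∈ C, M ≠ 0 → d ≤ Matrix.rank M)
    (hdimC : Module.finrank Fq C = n * (m - d + 1))
    (Cperp : Submodule Fq (Matrix (Fin m) (Fin n) Fq))
    (hCperp : (Cperp : Set (Matrix (Fin m) (Fin n) Fq))
        = {N | ∀ M ∈ C, Matrix.trace (M * Matrix.transpose N) = 0}) :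
    Module.finrank Fq Cperp = m * n - n * (m - d + 1) ∧
      ∀ N ∈ Cperp, N ≠ 0 → m - d + 2 ≤ Matrix.rank N :=
  delsarte_dual_MRD_general m n d hd1 hdm Fq C hrank hdimC Cperp hCperp
end

section
/- Let C be an MRD-code in 𝔽_q^{m×n} with minimum distance d, m ≤ n, containing the zero matrix. Then for every l with 0 ≤ l ≤ m - d, there exists a matrix C₀ ∈ C with rank(C₀) = d + l. -/
/-!
Identify a matrix `A` with the linear map `x ↦ x A` from `K^m` to `K^n`, which has rank `rank A`.
If `W ≤ K^m` has dimension `m - d + 1`, two codewords agreeing on `W` differ by a map of rank at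
most `d - 1`, so restriction to `W` is injective on `C`, and by the size of `C` it is a bijection
onto `Hom(W, K^n)`. Hence for every subspace `U` of dimension `u ≤ m - d + 1` exactly
`q^(n(m-d+1-u))` codewords vanish on `U`.

Fix `r = d + l`, a subspace `Z` of dimension `m - r` and a complement `V₀` of `Z`. The
`q^(n(r-d+1))` codewords vanishing on `Z` have rank at most `r`; one of rank `< r` also vanishes
on some nonzero `x ∈ V₀`, and for each such `x` only `q^(n(r-d))` codewords vanish on `Z + Kx`.
As `r ≤ n`, `(q^r - 1) q^(n(r-d)) < q^(n(r-d+1))`, so some codeword has rank exactly `r`.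
-/

open Module Submodule Set

theorem Set.Finite.ncard_biUnion_le_mul {ι α : Type*} {t : Set ι} (ht : t.Finite)
    (s : ι → Set α) {c : ℕ} (hs : ∀ i ∈ t, (s i).ncard ≤ c) :
    (⋃ i ∈ t, s i).ncard ≤ t.ncard * c := by
  calc (⋃ i ∈ t, s i).ncard = (⋃ i ∈ ht.toFinset, s i).ncard := by simp
    _ ≤ ∑ i ∈ ht.toFinset, (s i).ncard := Finset.set_ncard_biUnion_le _ _
    _ ≤ ht.toFinset.card * c :=
      Finset.sum_le_card_nsmul _ _ _ fun i hi => hs i (ht.mem_toFinset.1 hi)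
    _ = t.ncard * c := by rw [ncard_eq_toFinset_card t ht]

section RankMetricCode

variable {K V E : Type*} [Field K] [AddCommGroup V] [Module K V] [FiniteDimensional K V]
  [AddCommGroup E] [Module K E]

theorem Submodule.exists_le_finrank_eq_s6 (U : Submodule K V) {r : ℕ} (hUr : finrank K U ≤ r)
    (hrV : r ≤ finrank K V) : ∃ W : Submodule K V, U ≤ W ∧ finrank K W = r := by
  induction r, hUr using Nat.le_induction with
  | base => exact ⟨U, le_rfl, rfl⟩
  | succ r hUr ih =>
    obtain ⟨W, hUW, hW⟩ := ih (by omega)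
    obtain ⟨v, hv⟩ : ∃ v, v ∉ W := by
      by_contra! h
      rw [(eq_top_iff.2 fun v _ => h v : W = ⊤), finrank_top] at hW
      omega
    exact ⟨W ⊔ span K {v}, le_sup_of_le_left hUW, by rw [finrank_sup_span_singleton hv, hW]⟩

theorem LinearMap.finrank_range_add_finrank_le_of_le_ker (f : V →ₗ[K] E) {U : Submodule K V}
    (hU : U ≤ ker f) : finrank K (range f) + finrank K U ≤ finrank K V := by
  have := f.finrank_range_add_finrank_ker
  have := Submodule.finrank_mono hU
  omega

theorem LinearMap.ncard_setOf_le_ker [FiniteDimensional K E] (U : Submodule K V) :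
    {f : V →ₗ[K] E | U ≤ ker f}.ncard =
      Nat.card K ^ (finrank K E * (finrank K V - finrank K U)) := by
  let pullback : ((V ⧸ U) →ₗ[K] E) → V →ₗ[K] E := fun g => g ∘ₗ U.mkQ
  have hrange : Set.range pullback = {f | U ≤ ker f} := by
    ext f
    constructor
    · rintro ⟨g, rfl⟩ v hv
      simp [pullback, (Submodule.Quotient.mk_eq_zero U).2 hv]
    · intro hf
      exact ⟨U.liftQ f hf, U.liftQ_mkQ f hf⟩
  have hinj : Function.Injective pullback := fun _ _ => (cancel_right U.mkQ_surjective).1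
  rw [← hrange, ncard_range_of_injective hinj, natCard_eq_pow_finrank (K := K),
    finrank_linearMap K K, U.finrank_quotient, mul_comm]

theorem LinearMap.exists_ne_zero_sup_span_le_ker {Z V₀ : Submodule K V} (hZV₀ : IsCompl Z V₀)
    {f : V →ₗ[K] E} (hZ : Z ≤ ker f) (hf : finrank K (range f) ≠ finrank K V₀) :
    ∃ x ∈ V₀, x ≠ 0 ∧ Z ⊔ span K {x} ≤ ker f := by
  have hker : ker f ⊓ V₀ ≠ ⊥ := by
    intro hbot
    have h1 := Submodule.finrank_sup_add_finrank_inf_eq (ker f) V₀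
    have h2 := f.finrank_range_add_finrank_ker
    have h3 := Submodule.finrank_le (ker f ⊔ V₀)
    have h4 := f.finrank_range_add_finrank_le_of_le_ker hZ
    have h5 := Submodule.finrank_add_eq_of_isCompl hZV₀
    rw [hbot, finrank_bot] at h1
    omega
  obtain ⟨x, ⟨hxf, hxV₀⟩, hx0⟩ := exists_mem_ne_zero_of_ne_bot hker
  exact ⟨x, hxV₀, hx0, sup_le hZ ((span_singleton_le_iff_mem _ _).2 hxf)⟩

/-- A maximum rank distance code: rank distance at least `d` and the size
`q ^ (dim E * (dim V - d + 1))` of the Singleton bound (for `dim V ≤ dim E`). -/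
structure IsMRDCode (C : Set (V →ₗ[K] E)) (d : ℕ) : Prop where
  le_finrank_range_sub :
    ∀ f ∈ C, ∀ g ∈ C, f ≠ g → d ≤ finrank K (LinearMap.range (f - g))
  ncard_eq : C.ncard = Nat.card K ^ (finrank K E * (finrank K V - d + 1))

namespace IsMRDCode

variable {C : Set (V →ₗ[K] E)} {d : ℕ}

theorem injOn_domRestrict (hC : IsMRDCode C d) {W : Submodule K V}
    (hW : finrank K V < d + finrank K W) : InjOn (fun f => f.domRestrict W) C := by
  intro f hf g hg hfg
  by_contra hne
  have hker : W ≤ LinearMap.ker (f - g) := fun w hw => by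
    simpa [sub_eq_zero] using LinearMap.congr_fun hfg ⟨w, hw⟩
  have := (f - g).finrank_range_add_finrank_le_of_le_ker hker
  have := hC.le_finrank_range_sub f hf g hg hne
  omega

variable [FiniteDimensional K E] [Finite K]

theorem bijOn_domRestrict (hC : IsMRDCode C d) {W : Submodule K V}
    (hW : finrank K W = finrank K V - d + 1) : BijOn (fun f => f.domRestrict W) C univ := by
  have hinj := hC.injOn_domRestrict (W := W) (by omega)
  have : Finite (W →ₗ[K] E) := Module.finite_of_finite K
  refine ⟨mapsTo_univ _ _, hinj, ?_⟩
  rw [SurjOn, univ_subset_iff]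
  refine eq_of_subset_of_ncard_le (subset_univ _) ?_ (toFinite _)
  rw [hinj.ncard_image, hC.ncard_eq, ncard_univ, natCard_eq_pow_finrank (K := K),
    finrank_linearMap K K, hW, mul_comm]

theorem ncard_setOf_le_ker (hC : IsMRDCode C d) (hd : 1 ≤ d)
    (hdV : d ≤ finrank K V) {U : Submodule K V}
    (hU : finrank K U ≤ finrank K V - d + 1) :
    {f ∈ C | U ≤ LinearMap.ker f}.ncard =
      Nat.card K ^ (finrank K E * (finrank K V - d + 1 - finrank K U)) := by
  obtain ⟨W, hUW, hW⟩ := U.exists_le_finrank_eq_s6 hU (by omega)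
  have hbij := hC.bijOn_domRestrict hW
  have hpre : {f ∈ C | U ≤ LinearMap.ker f} =
      C ∩ (fun f => f.domRestrict W) ⁻¹' {g | U.comap W.subtype ≤ LinearMap.ker g} := by
    ext f
    refine and_congr_right fun _ => ⟨fun h w hw => h hw, fun h u hu => ?_⟩
    exact h (show (⟨u, hUW hu⟩ : W) ∈ U.comap W.subtype from hu)
  rw [hpre, ← (hbij.injOn.mono inter_subset_left).ncard_image, image_inter_preimage,
    hbij.image_eq, univ_inter, LinearMap.ncard_setOf_le_ker, hW,
    (comapSubtypeEquivOfLe hUW).finrank_eq]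

theorem exists_finrank_range_eq (hC : IsMRDCode C d) (hd : 1 ≤ d) {r : ℕ}
    (hdr : d ≤ r) (hrV : r ≤ finrank K V) (hrE : r ≤ finrank K E) :
    ∃ f ∈ C, finrank K (LinearMap.range f) = r := by
  obtain ⟨Z, -, hZ⟩ := (⊥ : Submodule K V).exists_le_finrank_eq_s6 (r := finrank K V - r)
    (by simp) (by omega)
  obtain ⟨V₀, hZV₀⟩ := Z.exists_isCompl
  have hV₀ : finrank K V₀ = r := by
    have := Submodule.finrank_add_eq_of_isCompl hZV₀
    omega
  by_contra! hne_r
  have hcover : {f ∈ C | Z ≤ LinearMap.ker f} ⊆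
      ⋃ x ∈ (V₀ : Set V) \ {0}, {f ∈ C | Z ⊔ span K {x} ≤ LinearMap.ker f} := by
    rintro f ⟨hf, hZf⟩
    obtain ⟨x, hxV₀, hx0, hxf⟩ :=
      LinearMap.exists_ne_zero_sup_span_le_ker hZV₀ hZf (hV₀ ▸ hne_r f hf)
    exact mem_biUnion (x := x) ⟨hxV₀, hx0⟩ ⟨hf, hxf⟩
  have hcount : ∀ x ∈ (V₀ : Set V) \ {0},
      {f ∈ C | Z ⊔ span K {x} ≤ LinearMap.ker f}.ncard ≤
        Nat.card K ^ (finrank K E * (r - d)) := by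
    rintro x ⟨hxV₀, hx0⟩
    have hxZ : x ∉ Z := fun hxZ => hx0 (disjoint_def.1 hZV₀.disjoint x hxZ hxV₀)
    have hdim := finrank_sup_span_singleton hxZ
    rw [hC.ncard_setOf_le_ker hd (by omega) (by omega), hdim, hZ,
      show finrank K V - d + 1 - (finrank K V - r + 1) = r - d by omega]
  have hV₀card : ((V₀ : Set V) \ {0}).ncard = Nat.card K ^ r - 1 := by
    rw [ncard_sdiff_singleton_of_mem V₀.zero_mem, ← Nat.card_coe_set_eq, SetLike.coe_sort_coe,
      natCard_eq_pow_finrank (K := K), hV₀]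
  have : Finite V := Module.finite_of_finite K
  have : Finite (V →ₗ[K] E) := Module.finite_of_finite K
  have hbound := (ncard_le_ncard hcover (toFinite _)).trans
    ((toFinite ((V₀ : Set V) \ {0})).ncard_biUnion_le_mul _ hcount)
  rw [hC.ncard_setOf_le_ker hd (by omega) (by omega), hZ, hV₀card,
    show finrank K V - d + 1 - (finrank K V - r) = (r - d) + 1 by omega, mul_add, mul_one,
    pow_add, mul_comm] at hbound
  have hq : 0 < Nat.card K := Nat.card_pos
  have hqr : Nat.card K ^ r ≤ Nat.card K ^ finrank K E := Nat.pow_le_pow_right hq hrE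
  have := Nat.le_of_mul_le_mul_right hbound (by positivity)
  have : 0 < Nat.card K ^ r := by positivity
  omega

end IsMRDCode

end RankMetricCode

section Matrix

variable {K m n : Type*} [Field K] [Fintype m]

theorem Matrix.rank_eq_finrank_range_vecMulLinear [Fintype n] (A : Matrix m n K) :
    A.rank = finrank K (LinearMap.range A.vecMulLinear) := by
  rw [← A.rank_transpose, Matrix.rank, Matrix.mulVecLin_transpose]

theorem Matrix.vecMulLinear_injective :
    Function.Injective (Matrix.vecMulLinear : Matrix m n K → (m → K) →ₗ[K] n → K) := by
  classical
  exact Matrix.toLinearMapRight'.injective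

theorem Matrix.vecMulLinear_sub (A B : Matrix m n K) :
    (A - B).vecMulLinear = A.vecMulLinear - B.vecMulLinear :=
  LinearMap.ext fun x => by simp

theorem isMRDCode_image_vecMulLinear [Fintype n] {C : Set (Matrix m n K)} {d : ℕ}
    (hdist : ∀ A ∈ C, ∀ B ∈ C, A ≠ B → d ≤ (A - B).rank)
    (hcard : C.ncard = Nat.card K ^ (Fintype.card n * (Fintype.card m - d + 1))) :
    IsMRDCode (Matrix.vecMulLinear '' C) d where
  le_finrank_range_sub := by
    rintro _ ⟨A, hA, rfl⟩ _ ⟨B, hB, rfl⟩ hAB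
    rw [← Matrix.vecMulLinear_sub, ← Matrix.rank_eq_finrank_range_vecMulLinear]
    exact hdist A hA B hB (ne_of_apply_ne _ hAB)
  ncard_eq := by
    rw [ncard_image_of_injective _ Matrix.vecMulLinear_injective, hcard,
      finrank_fintype_fun_eq_card, finrank_fintype_fun_eq_card]

end Matrix

theorem MRD_weight_spectrum_general
    (q m n d : ℕ) (hmn : m ≤ n) (hd1 : 1 ≤ d) (hdm : d ≤ m)
    (Fq : Type*) [Field Fq] [Fintype Fq] (hq : Fintype.card Fq = q)
    (C : Set (Matrix (Fin m) (Fin n) Fq))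
    (hdist : ∀ A ∈ C, ∀ B ∈ C, A ≠ B → d ≤ (A - B).rank)
    (hMRD : Set.ncard C = q ^ (n * (m - d + 1))) :
    ∀ l : ℕ, l ≤ m - d → ∃ C₀ ∈ C, Matrix.rank C₀ = d + l := by
  intro l hl
  have hC : IsMRDCode (Matrix.vecMulLinear '' C) d := isMRDCode_image_vecMulLinear hdist
    (by rw [hMRD, Nat.card_eq_fintype_card, hq, Fintype.card_fin, Fintype.card_fin])
  obtain ⟨_, ⟨A, hA, rfl⟩, hrank⟩ := hC.exists_finrank_range_eq hd1 (r := d + l) (by omega)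
    (by rw [finrank_fin_fun]; omega) (by rw [finrank_fin_fun]; omega)
  exact ⟨A, hA, by rw [Matrix.rank_eq_finrank_range_vecMulLinear, hrank]⟩

/-- an MRD-code containing 0 has codewords of every rank `d + l`,
`0 ≤ l ≤ m - d`. -/
theorem MRD_weight_spectrum
    (q m n d : ℕ) (hmn : m ≤ n) (hd1 : 1 ≤ d) (hdm : d ≤ m)
    (Fq : Type*) [Field Fq] [Fintype Fq] (hq : Fintype.card Fq = q)
    (C : Set (Matrix (Fin m) (Fin n) Fq))
    (hzero : 0 ∈ C)
    (hdist : ∀ A ∈ C, ∀ B ∈ C, A ≠ B → d ≤ (A - B).rank)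
    (hMRD : Set.ncard C = q ^ (n * (m - d + 1))) :
    ∀ l : ℕ, l ≤ m - d → ∃ C₀ ∈ C, Matrix.rank C₀ = d + l :=
  MRD_weight_spectrum_general q m n d hmn hd1 hdm Fq hq C hdist hMRD
end

section
/- Let C be an 𝔽_q-linear MRD-code in 𝔽_q^{m×n} with minimum distance d, m ≤ n. Then the number of codewords of C of rank exactly d is A_d(C) = (q^n - 1)(q^m - 1)(q^{m-1} - 1)⋯(q^{m-d+1} - 1) / ((q^d - 1)(q^{d-1} - 1)⋯(q - 1)). -/
open Module Finset Matrix

/-- Fibers of the span map: independent tuples spanning `W` correspond to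
independent tuples in `W`. -/
noncomputable def MRDaux.fiberEquiv {K V : Type*} [Field K] [AddCommGroup V] [Module K V]
    [FiniteDimensional K V] (r : ℕ) (W : Submodule K V) (hW : finrank K W = r) :
    {s : {s : Fin r → V // LinearIndependent K s} //
        Submodule.span K (Set.range s.1) = W} ≃
      {t : Fin r → W // LinearIndependent K t} where
  toFun s := ⟨fun i => ⟨s.1.1 i, by
      have := Submodule.subset_span (R := K) (Set.mem_range_self (f := s.1.1) i)
      rwa [s.2] at this⟩,
    by
      apply LinearIndependent.of_comp W.subtype
      exact s.1.2⟩
  invFun t := ⟨⟨fun i => (t.1 i : V), (t.2.map' W.subtype W.ker_subtype)⟩, by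
    have hsp : Submodule.span K (Set.range t.1) = ⊤ := by
      apply t.2.span_eq_top_of_card_eq_finrank'
      simp [hW]
    show Submodule.span K (Set.range fun i => (t.1 i : V)) = W
    have h2 : (fun i => (t.1 i : V)) = W.subtype ∘ t.1 := rfl
    rw [h2, Set.range_comp, ← Submodule.map_span, hsp, Submodule.map_top,
      Submodule.range_subtype]⟩
  left_inv s := by ext i; rfl
  right_inv t := by ext i; rfl

/-- Counting subspaces of a fixed dimension in a finite vector space. -/
lemma MRDaux.count_subspaces (K V : Type*) [Field K] [Fintype K] [AddCommGroup V] [Module K V]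
    [FiniteDimensional K V] (r : ℕ) (hr : r ≤ finrank K V) :
    Nat.card {W : Submodule K V // finrank K W = r} *
        ∏ i ∈ range r, (Fintype.card K ^ r - Fintype.card K ^ i)
      = ∏ i ∈ range r, (Fintype.card K ^ finrank K V - Fintype.card K ^ i) := by
  haveI : Finite V := Module.finite_of_finite K
  have key : Nat.card {s : Fin r → V // LinearIndependent K s}
      = ∏ i ∈ range r, (Fintype.card K ^ finrank K V - Fintype.card K ^ i) := by
    rw [card_linearIndependent hr, ← Fin.prod_univ_eq_prod_range]
  rw [← key]
  set f : {s : Fin r → V // LinearIndependent K s} → {W : Submodule K V // finrank K W = r} :=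
    fun s => ⟨Submodule.span K (Set.range s.1), by
      rw [finrank_span_eq_card s.2, Fintype.card_fin]⟩ with hf
  rw [Nat.card_congr (Equiv.sigmaFiberEquiv f).symm]
  haveI : Fintype {W : Submodule K V // finrank K W = r} := Fintype.ofFinite _
  haveI : ∀ W, Fintype {s : {s : Fin r → V // LinearIndependent K s} // f s = W} :=
    fun W => Fintype.ofFinite _
  have hsig : Nat.card ((W : {W : Submodule K V // finrank K W = r}) × {s // f s = W})
      = ∑ W : {W : Submodule K V // finrank K W = r}, Fintype.card {s // f s = W} := by
    rw [Nat.card_eq_fintype_card, Fintype.card_sigma]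
  rw [hsig]
  have hfib : ∀ W : {W : Submodule K V // finrank K W = r},
      Fintype.card {s : {s : Fin r → V // LinearIndependent K s} // f s = W}
        = ∏ i ∈ range r, (Fintype.card K ^ r - Fintype.card K ^ i) := by
    intro W
    have e1 : {s : {s : Fin r → V // LinearIndependent K s} // f s = W} ≃
        {s : {s : Fin r → V // LinearIndependent K s} //
          Submodule.span K (Set.range s.1) = W.1} := by
      apply Equiv.subtypeEquivRight
      intro s
      constructor
      · intro h; rw [← h]
      · intro h; exact Subtype.ext h
    haveI : Finite W.1 := Module.finite_of_finite K
    have := card_linearIndependent (K := K) (V := W.1) (k := r) (by rw [W.2])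
    rw [← Nat.card_eq_fintype_card, Nat.card_congr (e1.trans (MRDaux.fiberEquiv r W.1 W.2)),
      this, ← Fin.prod_univ_eq_prod_range, W.2]
  rw [Finset.sum_congr rfl (fun W _ => hfib W), Finset.sum_const, smul_eq_mul,
    ← Nat.card_eq_fintype_card, Finset.card_univ, ← Nat.card_eq_fintype_card]

/-- Duality: subspaces of codimension `r` are in bijection with `r`-dimensional
subspaces of the dual space. -/
lemma MRDaux.codim_equiv (K V : Type*) [Field K] [AddCommGroup V] [Module K V]
    [FiniteDimensional K V] (r : ℕ) (hr : r ≤ finrank K V) :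
    Nat.card {W : Submodule K V // finrank K W = finrank K V - r}
      = Nat.card {U : Submodule K (Module.Dual K V) // finrank K U = r} := by
  apply Nat.card_congr
  refine ⟨fun W => ⟨W.1.dualAnnihilator, ?_⟩, fun U => ⟨U.1.dualCoannihilator, ?_⟩, ?_, ?_⟩
  · have h1 := Subspace.finrank_add_finrank_dualCoannihilator_eq (W.1.dualAnnihilator)
    rw [Subspace.dualAnnihilator_dualCoannihilator_eq, W.2] at h1
    omega
  · have h1 := Subspace.finrank_add_finrank_dualCoannihilator_eq U.1
    rw [U.2] at h1
    omega
  · intro W; exact Subtype.ext (Subspace.dualAnnihilator_dualCoannihilator_eq)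
  · intro U; exact Subtype.ext (Subspace.dualCoannihilator_dualAnnihilator_eq)

/-- Rank bound from independent rows in the left kernel. -/
lemma MRDaux.rank_add_le {Fq : Type*} [Field Fq] {m n s : ℕ}
    (M : Matrix (Fin m) (Fin n) Fq) (v : Fin s → (Fin m → Fq))
    (hv : LinearIndependent Fq v) (hker : ∀ i, Matrix.vecMul (v i) M = 0) :
    M.rank + s ≤ m := by
  have hle : Submodule.span Fq (Set.range v) ≤ LinearMap.ker (Matrix.mulVecLin Mᵀ) := by
    rw [Submodule.span_le]
    rintro _ ⟨i, rfl⟩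
    simp only [SetLike.mem_coe, LinearMap.mem_ker, Matrix.mulVecLin_apply,
      Matrix.mulVec_transpose, hker i]
  have h1 : s ≤ finrank Fq (LinearMap.ker (Matrix.mulVecLin Mᵀ)) := by
    calc s = finrank Fq (Submodule.span Fq (Set.range v)) := by
            rw [finrank_span_eq_card hv, Fintype.card_fin]
      _ ≤ _ := Submodule.finrank_mono hle
  have h2 := LinearMap.finrank_range_add_finrank_ker (Matrix.mulVecLin Mᵀ)
  have h3 : Matrix.rank Mᵀ = finrank Fq (LinearMap.range (Matrix.mulVecLin Mᵀ)) := rfl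
  have h4 := Matrix.rank_transpose M
  simp only [finrank_pi, Fintype.card_fin] at h2
  omega

lemma MRDaux.row_mul {Fq : Type*} [Field Fq] {m n s : ℕ} (B : Matrix (Fin s) (Fin m) Fq)
    (M : Matrix (Fin m) (Fin n) Fq) (i : Fin s) : (B * M) i = Matrix.vecMul (B i) M := by
  funext j
  simp [Matrix.mul_apply, Matrix.vecMul, dotProduct]

/-- The number of codewords annihilated (on the left) by a fixed subspace of
dimension `m - d` is `q ^ n`. -/
lemma MRDaux.card_killed {Fq : Type*} [Field Fq] [Fintype Fq] {m n d : ℕ}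
    (hd1 : 1 ≤ d) (hdm : d ≤ m)
    (C : Submodule Fq (Matrix (Fin m) (Fin n) Fq))
    (hrank : ∀ M ∈ C, M ≠ 0 → d ≤ Matrix.rank M)
    (hdimC : Module.finrank Fq C = n * (m - d + 1))
    (W : Submodule Fq (Fin m → Fq)) (hW : finrank Fq W = m - d) :
    Nat.card {M : Matrix (Fin m) (Fin n) Fq // M ∈ C ∧ ∀ w ∈ W, Matrix.vecMul w M = 0}
      = Fintype.card Fq ^ n := by
  classical
  set k := m - d with hk
  let bW : Basis (Fin k) Fq W := finBasisOfFinrankEq Fq W hW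
  set rows0 : Fin k → (Fin m → Fq) := fun i => (bW i : Fin m → Fq) with hrows0def
  have hrows0 : LinearIndependent Fq rows0 := bW.linearIndependent.map' W.subtype W.ker_subtype
  have hspan0 : Submodule.span Fq (Set.range rows0) = W := by
    have : rows0 = W.subtype ∘ bW := rfl
    rw [this, Set.range_comp, ← Submodule.map_span, bW.span_eq, Submodule.map_top,
      Submodule.range_subtype]
  have hWne : W ≠ ⊤ := by
    intro h
    rw [h, finrank_top, finrank_pi, Fintype.card_fin] at hW
    omega
  obtain ⟨v, -, hv⟩ := SetLike.exists_of_lt (lt_top_iff_ne_top.mpr hWne : W < ⊤)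
  set rows : Fin (k + 1) → (Fin m → Fq) := Fin.cons v rows0 with hrowsdef
  have hrows : LinearIndependent Fq rows :=
    linearIndependent_fin_cons.mpr ⟨hrows0, by rw [hspan0]; exact hv⟩
  set B1 : Matrix (Fin (k + 1)) (Fin m) Fq := Matrix.of rows with hB1def
  have hB1row : ∀ i, B1 i = rows i := fun i => rfl
  let ψ0 : Matrix (Fin m) (Fin n) Fq →ₗ[Fq] Matrix (Fin (k + 1)) (Fin n) Fq :=
    { toFun := fun N => B1 * N
      map_add' := fun N1 N2 => Matrix.mul_add _ _ _
      map_smul' := fun c N => (Matrix.mul_smul _ _ _) }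
  let ψ : C →ₗ[Fq] Matrix (Fin (k + 1)) (Fin n) Fq := ψ0 ∘ₗ C.subtype
  have hψ : ∀ x : C, ψ x = B1 * (x : Matrix (Fin m) (Fin n) Fq) := fun x => rfl
  have hinj : Function.Injective ψ := by
    rw [← LinearMap.ker_eq_bot, LinearMap.ker_eq_bot']
    rintro ⟨M, hM⟩ h0
    have hMrows : ∀ i, Matrix.vecMul (rows i) M = 0 := by
      intro i
      have : (B1 * M) i = 0 := by
        have : B1 * M = 0 := h0
        rw [this]; rfl
      rwa [MRDaux.row_mul, hB1row] at this
    have hbound := MRDaux.rank_add_le M rows hrows hMrows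
    by_contra hne
    have hMne : M ≠ 0 := fun h => hne (by simp [h])
    have := hrank M hM hMne
    omega
  have hfr : finrank Fq C = finrank Fq (Matrix (Fin (k + 1)) (Fin n) Fq) := by
    rw [hdimC, finrank_matrix, Fintype.card_fin, Fintype.card_fin, Module.finrank_self,
      mul_one, mul_comm]
  let e : C ≃ₗ[Fq] Matrix (Fin (k + 1)) (Fin n) Fq := ψ.linearEquivOfInjective hinj hfr
  have he : ∀ x : C, e x = B1 * (x : Matrix (Fin m) (Fin n) Fq) := fun x => rfl
  have hpred : ∀ M : Matrix (Fin m) (Fin n) Fq,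
      (∀ w ∈ W, Matrix.vecMul w M = 0) ↔ (∀ i : Fin k, Matrix.vecMul (rows0 i) M = 0) := by
    intro M
    constructor
    · intro h i
      exact h (rows0 i) (bW i).2
    · intro h w hw
      rw [← hspan0] at hw
      induction hw using Submodule.span_induction with
      | mem x hx => obtain ⟨i, rfl⟩ := hx; exact h i
      | zero => rw [Matrix.zero_vecMul]
      | add x y _ _ hx hy => rw [Matrix.add_vecMul, hx, hy, add_zero]
      | smul c x _ hx => rw [Matrix.smul_vecMul, hx, smul_zero]
  let Φ : {M : Matrix (Fin m) (Fin n) Fq // M ∈ C ∧ ∀ w ∈ W, Matrix.vecMul w M = 0} ≃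
      {N : Matrix (Fin (k + 1)) (Fin n) Fq // ∀ i : Fin k, N i.succ = 0} :=
    { toFun := fun x => ⟨e ⟨x.1, x.2.1⟩, by
        intro i
        rw [he, MRDaux.row_mul, hB1row]
        have h2 : rows i.succ = rows0 i := by
          rw [hrowsdef]; simp
        rw [h2]
        exact (hpred x.1).mp x.2.2 i⟩
      invFun := fun y => ⟨(e.symm y.1 : Matrix (Fin m) (Fin n) Fq), (e.symm y.1).2, by
        apply (hpred _).mpr
        intro i
        have h1 : (B1 * (e.symm y.1 : Matrix (Fin m) (Fin n) Fq)) i.succ = y.1 i.succ := by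
          rw [← he, e.apply_symm_apply]
        rw [MRDaux.row_mul, hB1row] at h1
        have h2 : rows i.succ = rows0 i := by
          rw [hrowsdef]; simp
        rw [h2] at h1
        rw [h1]
        exact y.2 i⟩
      left_inv := fun x => by
        apply Subtype.ext
        show ((e.symm (e ⟨x.1, x.2.1⟩) : C) : Matrix (Fin m) (Fin n) Fq) = x.1
        rw [e.symm_apply_apply]
      right_inv := fun y => by
        apply Subtype.ext
        show e ⟨(e.symm y.1 : Matrix (Fin m) (Fin n) Fq), _⟩ = y.1
        have : (⟨(e.symm y.1 : Matrix (Fin m) (Fin n) Fq), _⟩ : C) = e.symm y.1 := rfl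
        rw [this, e.apply_symm_apply] }
  rw [Nat.card_congr Φ]
  let Ψ : {N : Matrix (Fin (k + 1)) (Fin n) Fq // ∀ i : Fin k, N i.succ = 0} ≃ (Fin n → Fq) :=
    { toFun := fun N => N.1 0
      invFun := fun r => ⟨Matrix.of (Fin.cons (α := fun _ => Fin n → Fq) r 0), fun i => by
        show Fin.cons (α := fun _ => Fin n → Fq) r 0 i.succ = 0
        rw [Fin.cons_succ]
        rfl⟩
      left_inv := fun N => by
        apply Subtype.ext
        funext i
        refine Fin.cases ?_ ?_ i
        · rfl
        · intro j
          show Fin.cons (α := fun _ => Fin n → Fq) (N.1 0) 0 j.succ = N.1 j.succ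
          rw [Fin.cons_succ, N.2 j]
          rfl
      right_inv := fun r => by funext j; rfl }
  rw [Nat.card_congr Ψ, Nat.card_eq_fintype_card, Fintype.card_fun, Fintype.card_fin]

/-- Arithmetic endgame. -/
lemma MRDaux.endgame (q m d N A : ℕ) (hq : 2 ≤ q) (hdm : d ≤ m)
    (h : N * ∏ i ∈ range d, (q ^ d - q ^ i) = ∏ i ∈ range d, (q ^ m - q ^ i)) :
    N * A = A * (∏ i ∈ range d, (q ^ (m - i) - 1)) / ∏ i ∈ range d, (q ^ (d - i) - 1) := by
  have fact : ∀ s : ℕ, d ≤ s → ∏ i ∈ range d, (q ^ s - q ^ i)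
      = (∏ i ∈ range d, q ^ i) * ∏ i ∈ range d, (q ^ (s - i) - 1) := by
    intro s hs
    rw [← Finset.prod_mul_distrib]
    apply Finset.prod_congr rfl
    intro i hi
    rw [Finset.mem_range] at hi
    have his : i + (s - i) = s := by omega
    rw [Nat.mul_sub, mul_one, ← pow_add, his]
  have hQ : (0 : ℕ) < ∏ i ∈ range d, q ^ i := by
    apply Finset.prod_pos; intro i _; positivity
  have hPd : (0 : ℕ) < ∏ i ∈ range d, (q ^ (d - i) - 1) := by
    apply Finset.prod_pos
    intro i hi
    rw [Finset.mem_range] at hi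
    have : 2 ≤ q ^ (d - i) := le_trans hq (Nat.le_self_pow (by omega) q)
    omega
  rw [fact m hdm, fact d le_rfl] at h
  have hND : N * ∏ i ∈ range d, (q ^ (d - i) - 1) = ∏ i ∈ range d, (q ^ (m - i) - 1) := by
    apply Nat.eq_of_mul_eq_mul_left hQ
    calc (∏ i ∈ range d, q ^ i) * (N * ∏ i ∈ range d, (q ^ (d - i) - 1))
        = N * ((∏ i ∈ range d, q ^ i) * ∏ i ∈ range d, (q ^ (d - i) - 1)) := by ring
      _ = _ := h
  rw [← hND, ← mul_assoc, Nat.mul_div_cancel _ hPd, mul_comm]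

/-- the number of minimum-weight codewords of a linear MRD-code:
`A_d(C) = (q^n-1)(q^m-1)⋯(q^{m-d+1}-1) / ((q^d-1)⋯(q-1))`. -/
theorem MRD_min_weight_count
    (q m n d : ℕ) (hmn : m ≤ n) (hd1 : 1 ≤ d) (hdm : d ≤ m)
    (Fq : Type*) [Field Fq] [Fintype Fq] (hq : Fintype.card Fq = q)
    (C : Submodule Fq (Matrix (Fin m) (Fin n) Fq))
    (hrank : ∀ M ∈ C, M ≠ 0 → d ≤ Matrix.rank M)
    (hdimC : Module.finrank Fq C = n * (m - d + 1)) :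
    Set.ncard {M : Matrix (Fin m) (Fin n) Fq | M ∈ C ∧ Matrix.rank M = d}
      = (q ^ n - 1) * (∏ i ∈ Finset.range d, (q ^ (m - i) - 1))
          / ∏ i ∈ Finset.range d, (q ^ (d - i) - 1) := by
  classical
  subst hq
  have hq2 : 2 ≤ Fintype.card Fq := Fintype.one_lt_card
  set lk : Matrix (Fin m) (Fin n) Fq → Submodule Fq (Fin m → Fq) :=
    fun M => LinearMap.ker (Matrix.mulVecLin Mᵀ) with hlk
  have hrk : ∀ M : Matrix (Fin m) (Fin n) Fq, finrank Fq (lk M) + M.rank = m := by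
    intro M
    show finrank Fq (LinearMap.ker (Matrix.mulVecLin Mᵀ)) + M.rank = m
    have h2 := LinearMap.finrank_range_add_finrank_ker (Matrix.mulVecLin Mᵀ)
    have h3 : Matrix.rank Mᵀ = finrank Fq (LinearMap.range (Matrix.mulVecLin Mᵀ)) := rfl
    have h4 := Matrix.rank_transpose M
    simp only [finrank_pi, Fintype.card_fin] at h2
    omega
  have hmem : ∀ (M : Matrix (Fin m) (Fin n) Fq) (w : Fin m → Fq),
      w ∈ lk M ↔ Matrix.vecMul w M = 0 := by
    intro M w
    simp [hlk, Matrix.mulVec_transpose]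
  -- fiber count
  have hfib : ∀ W : Submodule Fq (Fin m → Fq), finrank Fq W = m - d →
      Nat.card {M : Matrix (Fin m) (Fin n) Fq //
          (M ∈ C ∧ Matrix.rank M = d) ∧ lk M = W}
        = Fintype.card Fq ^ n - 1 := by
    intro W hW
    have hiff : ∀ M : Matrix (Fin m) (Fin n) Fq,
        ((M ∈ C ∧ Matrix.rank M = d) ∧ lk M = W) ↔
        ((M ∈ C ∧ ∀ w ∈ W, Matrix.vecMul w M = 0) ∧ ¬ (M = 0)) := by
      intro M
      constructor
      · rintro ⟨⟨hMC, hMr⟩, hlkM⟩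
        refine ⟨⟨hMC, fun w hw => (hmem M w).mp (hlkM ▸ hw)⟩, ?_⟩
        intro h0
        rw [h0, Matrix.rank_zero] at hMr
        omega
      · rintro ⟨⟨hMC, hkill⟩, hM0⟩
        have hrge := hrank M hMC hM0
        have hle : W ≤ lk M := fun w hw => (hmem M w).mpr (hkill w hw)
        have hfin : finrank Fq (lk M) ≤ finrank Fq W := by
          have := hrk M
          omega
        have heq : W = lk M := Submodule.eq_of_le_of_finrank_le hle hfin
        have hrd : Matrix.rank M = d := by
          have h1 := hrk M
          rw [← heq, hW] at h1
          omega
        exact ⟨⟨hMC, hrd⟩, heq.symm⟩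
    rw [Nat.card_congr (Equiv.subtypeEquivRight hiff)]
    rw [Nat.card_congr (Equiv.subtypeSubtypeEquivSubtypeInter
      (fun M => M ∈ C ∧ ∀ w ∈ W, Matrix.vecMul w M = 0) (fun M => ¬ (M = 0))).symm]
    haveI : Fintype {M : Matrix (Fin m) (Fin n) Fq //
        M ∈ C ∧ ∀ w ∈ W, Matrix.vecMul w M = 0} := Fintype.ofFinite _
    rw [Nat.card_eq_fintype_card, Fintype.card_subtype_compl]
    have hone : Fintype.card {x : {M : Matrix (Fin m) (Fin n) Fq //
        M ∈ C ∧ ∀ w ∈ W, Matrix.vecMul w M = 0} // x.1 = 0} = 1 := by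
      rw [Fintype.card_eq_one_iff]
      refine ⟨⟨⟨0, C.zero_mem, fun w _ => by simp⟩, rfl⟩, ?_⟩
      rintro ⟨⟨M, hM⟩, h0⟩
      exact Subtype.ext (Subtype.ext h0)
    rw [hone, ← Nat.card_eq_fintype_card,
      MRDaux.card_killed hd1 hdm C hrank hdimC W hW]
  -- fibration over left kernels
  have key : Nat.card {M : Matrix (Fin m) (Fin n) Fq // M ∈ C ∧ Matrix.rank M = d}
      = Nat.card {W : Submodule Fq (Fin m → Fq) // finrank Fq W = m - d} *
          (Fintype.card Fq ^ n - 1) := by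
    set T := {W : Submodule Fq (Fin m → Fq) // finrank Fq W = m - d} with hT
    set κ : {M : Matrix (Fin m) (Fin n) Fq // M ∈ C ∧ Matrix.rank M = d} → T :=
      fun M => ⟨lk M.1, by
        have h1 := hrk M.1
        rw [M.2.2] at h1
        omega⟩ with hκ
    rw [Nat.card_congr (Equiv.sigmaFiberEquiv κ).symm]
    haveI : Fintype T := Fintype.ofFinite _
    haveI : ∀ W : T, Fintype {M // κ M = W} := fun W => Fintype.ofFinite _
    have hsig : Nat.card ((W : T) × {M // κ M = W})
        = ∑ W : T, Fintype.card {M // κ M = W} := by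
      rw [Nat.card_eq_fintype_card, Fintype.card_sigma]
    rw [hsig]
    have hWc : ∀ W : T, Fintype.card {M // κ M = W} = Fintype.card Fq ^ n - 1 := by
      intro W
      rw [← Nat.card_eq_fintype_card]
      have e2 : {M : {M : Matrix (Fin m) (Fin n) Fq // M ∈ C ∧ Matrix.rank M = d} //
            κ M = W} ≃
          {M : Matrix (Fin m) (Fin n) Fq // (M ∈ C ∧ Matrix.rank M = d) ∧ lk M = W.1} :=
        { toFun := fun x => ⟨x.1.1, ⟨x.1.2, congrArg Subtype.val x.2⟩⟩
          invFun := fun y => ⟨⟨y.1, y.2.1⟩, Subtype.ext y.2.2⟩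
          left_inv := fun x => rfl
          right_inv := fun y => rfl }
      rw [Nat.card_congr e2, hfib W.1 W.2]
    rw [Finset.sum_congr rfl (fun W _ => hWc W), Finset.sum_const, smul_eq_mul,
      Finset.card_univ, ← Nat.card_eq_fintype_card]
  -- counting the subspaces
  have hfrm : finrank Fq (Fin m → Fq) = m := by
    rw [finrank_pi, Fintype.card_fin]
  have hTcount : Nat.card {W : Submodule Fq (Fin m → Fq) // finrank Fq W = m - d} *
        ∏ i ∈ range d, (Fintype.card Fq ^ d - Fintype.card Fq ^ i)
      = ∏ i ∈ range d, (Fintype.card Fq ^ m - Fintype.card Fq ^ i) := by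
    have h1 := MRDaux.codim_equiv Fq (Fin m → Fq) d (by rw [hfrm]; exact hdm)
    rw [hfrm] at h1
    rw [h1]
    have h2 := MRDaux.count_subspaces Fq (Module.Dual Fq (Fin m → Fq)) d
      (by rw [Subspace.dual_finrank_eq, hfrm]; exact hdm)
    rwa [Subspace.dual_finrank_eq, hfrm] at h2
  -- put everything together
  have hcoe : Set.ncard {M : Matrix (Fin m) (Fin n) Fq | M ∈ C ∧ Matrix.rank M = d}
      = Nat.card {M : Matrix (Fin m) (Fin n) Fq // M ∈ C ∧ Matrix.rank M = d} := by
    rw [← Nat.card_coe_set_eq]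
    exact Nat.card_congr (Equiv.subtypeEquivRight fun M => Iff.rfl)
  rw [hcoe, key]
  exact MRDaux.endgame (Fintype.card Fq) m d _ _ hq2 hdm hTcount
end

section
/- Let C ⊆ 𝔽_q^{m×n} be an 𝔽_q-linear MRD-code with minimum distance d > 1 and m ≤ n. Then the left idealiser L(C) = {Y ∈ 𝔽_q^{m×m} : YC ∈ C for all C ∈ C} is a finite field (under matrix addition and multiplication) of cardinality at most q^m. -/
/-!
A nonzero `Y` in the left idealiser is invertible. Otherwise let `r = rank Y`, with `0 < r < m`:
left multiplication by `Y` maps `C` into codewords with column space in `im Y`, and its kernel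
consists of codewords with column space in `ker Y`. A space of matrices of rank `> d - 1` with
column spaces in a fixed `U` meets the `n(d - 1)`-dimensional space of matrices with columns in
a `(d - 1)`-dimensional `U' ≤ U` trivially, so its dimension is at most `n(dim U - d + 1)`.
Hence `n(m - d + 1) = dim C ≤ n(r - d + 1)⁺ + n(m - r - d + 1)⁺`, impossible for `d > 1`.
So the left idealiser is a finite ring without zero divisors, hence a field by Wedderburn's
little theorem, and `Y ↦ Y e₁` embeds it into `𝔽_q^m`, as differences of its elements are
invertible.
-/

open Module LinearMap

namespace Submodule

variable {K W : Type*} [Field K] [AddCommGroup W] [Module K W]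

theorem exists_le_finrank_eq_s8 (U : Submodule K W) [FiniteDimensional K U] {k : ℕ}
    (hk : k ≤ finrank K U) : ∃ U' ≤ U, finrank K U' = k := by
  obtain ⟨f, hf⟩ := exists_linearIndependent_of_le_finrank hk
  refine ⟨(span K (Set.range f)).map U.subtype, map_subtype_le _ _, ?_⟩
  rw [finrank_map_subtype_eq, finrank_span_eq_card hf, Fintype.card_fin]

variable (V : Type*) [AddCommGroup V] [Module K V]

def linearMapsInto (U : Submodule K W) : Submodule K (V →ₗ[K] W) :=
  range (compRight K U.subtype)

variable {V}

theorem mem_linearMapsInto {U : Submodule K W} {f : V →ₗ[K] W} :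
    f ∈ linearMapsInto V U ↔ range f ≤ U := by
  refine ⟨?_, fun h => ⟨f.codRestrict U fun v => h (mem_range_self f v), rfl⟩⟩
  rintro ⟨g, rfl⟩
  exact (range_comp_le_range g U.subtype).trans U.range_subtype.le

theorem linearMapsInto_mono {U U' : Submodule K W} (h : U' ≤ U) :
    linearMapsInto V U' ≤ linearMapsInto V U := fun _ hf =>
  mem_linearMapsInto.2 ((mem_linearMapsInto.1 hf).trans h)

theorem finrank_linearMapsInto [FiniteDimensional K V] (U : Submodule K W)
    [FiniteDimensional K U] :
    finrank K (linearMapsInto V U) = finrank K V * finrank K U := by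
  rw [linearMapsInto, finrank_range_of_inj, finrank_linearMap]
  exact fun g h hgh => LinearMap.ext fun v => Subtype.ext (LinearMap.congr_fun hgh v)

end Submodule

open Submodule

theorem finrank_le_mul_of_lt_finrank_range {K V W : Type*} [Field K]
    [AddCommGroup V] [Module K V] [FiniteDimensional K V]
    [AddCommGroup W] [Module K W] [FiniteDimensional K W]
    (D : Submodule K (V →ₗ[K] W)) (U : Submodule K W) {d : ℕ}
    (hU : ∀ f ∈ D, range f ≤ U) (hd : ∀ f ∈ D, f ≠ 0 → d < finrank K (range f)) :
    finrank K D ≤ finrank K V * (finrank K U - d) := by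
  obtain ⟨U', hU'U, hU'⟩ := U.exists_le_finrank_eq_s8 (min_le_right d (finrank K U))
  have hdisj : D ⊓ linearMapsInto V U' = ⊥ := by
    refine eq_bot_iff.2 fun f ⟨hfD, hfU'⟩ => (mem_bot K).2 <| by_contra fun hf0 => ?_
    have := (hd f hfD hf0).trans_le (finrank_mono (mem_linearMapsInto.1 hfU'))
    omega
  have hsup : D ⊔ linearMapsInto V U' ≤ linearMapsInto V U :=
    sup_le (fun f hf => mem_linearMapsInto.2 (hU f hf)) (linearMapsInto_mono hU'U)
  have hsum := finrank_sup_add_finrank_inf_eq D (linearMapsInto V U')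
  rw [hdisj, finrank_bot, finrank_linearMapsInto, hU'] at hsum
  have hle := finrank_mono hsup
  rw [finrank_linearMapsInto] at hle
  rw [show finrank K U - d = finrank K U - min d (finrank K U) by omega, Nat.mul_sub]
  omega

theorem Subring.isField_of_forall_isUnit {R : Type*} [Ring R] (S : Subring R) [Finite S]
    [Nontrivial S] (h : ∀ x ∈ S, x ≠ 0 → IsUnit x) : IsField S := by
  have : NoZeroDivisors S := ⟨fun {a b} hab => or_iff_not_imp_left.2 fun ha =>
    Subtype.ext <| (h a a.2 fun h0 => ha (Subtype.ext h0)).mul_right_eq_zero.1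
      (congrArg Subtype.val hab)⟩
  have := NoZeroDivisors.to_isDomain S
  exact Finite.isDomain_to_isField S

namespace Matrix

variable {K ι κ : Type*} [Field K] [Fintype κ]

theorem finrank_le_mul_of_lt_rank [Fintype ι] (D : Submodule K (Matrix ι κ K))
    (U : Submodule K (ι → K)) {d : ℕ} (hU : ∀ M ∈ D, range M.mulVecLin ≤ U)
    (hd : ∀ M ∈ D, M ≠ 0 → d < M.rank) :
    finrank K D ≤ Fintype.card κ * (finrank K U - d) := by
  classical
  have key := finrank_le_mul_of_lt_finrank_range (d := d)
    (D.map (toLin' : Matrix ι κ K ≃ₗ[K] _).toLinearMap) U ?_ ?_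
  · rwa [LinearEquiv.finrank_map_eq, finrank_fintype_fun_eq_card] at key
  · rintro _ ⟨M, hM, rfl⟩
    simpa [toLin'_apply'] using hU M hM
  · rintro _ ⟨M, hM, rfl⟩ h0
    rw [LinearEquiv.coe_coe, toLin'_apply']
    exact hd M hM fun h => h0 (by rw [h, map_zero])

theorem rank_pos_of_ne_zero {Y : Matrix ι κ K} (hY : Y ≠ 0) : 0 < Y.rank := by
  classical
  refine Nat.pos_of_ne_zero fun h => hY <| toLin'.injective ?_
  rw [map_zero, toLin'_apply', ← range_eq_bot]
  exact Submodule.finrank_eq_zero.1 h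

theorem isUnit_of_rank_eq_card [Fintype ι] [DecidableEq ι] {Y : Matrix ι ι K}
    (hY : Y.rank = Fintype.card ι) : IsUnit Y := by
  refine mulVec_surjective_iff_isUnit.1 <|
    (range_eq_top (f := Y.mulVecLin)).1 (Submodule.eq_top_of_finrank_eq ?_)
  rwa [finrank_fintype_fun_eq_card]

theorem finrank_ker_mulVecLin (Y : Matrix ι κ K) :
    finrank K (ker Y.mulVecLin) = Fintype.card κ - Y.rank := by
  have := finrank_range_add_finrank_ker Y.mulVecLin
  rw [finrank_fintype_fun_eq_card] at this
  rw [rank]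
  omega

variable [Fintype ι] [DecidableEq ι]

def leftIdealiser {R : Type*} [Ring R] (C : Submodule R (Matrix ι κ R)) :
    Subring (Matrix ι ι R) where
  carrier := {Y | ∀ M ∈ C, Y * M ∈ C}
  mul_mem' {Y Z} hY hZ M hM := by rw [Matrix.mul_assoc]; exact hY _ (hZ M hM)
  one_mem' M hM := by rwa [Matrix.one_mul]
  add_mem' {Y Z} hY hZ M hM := by rw [Matrix.add_mul]; exact C.add_mem (hY M hM) (hZ M hM)
  zero_mem' M _ := by rw [Matrix.zero_mul]; exact C.zero_mem
  neg_mem' {Y} hY M hM := by rw [Matrix.neg_mul]; exact C.neg_mem (hY M hM)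

theorem isUnit_of_mem_leftIdealiser [Nonempty κ] {C : Submodule K (Matrix ι κ K)} {d : ℕ}
    (hd : 1 < d) (hrank : ∀ M ∈ C, M ≠ 0 → d ≤ M.rank)
    (hdim : finrank K C = Fintype.card κ * (Fintype.card ι - d + 1))
    {Y : Matrix ι ι K} (hY : Y ∈ leftIdealiser C) (hY0 : Y ≠ 0) : IsUnit Y := by
  by_contra hYu
  have hr0 := rank_pos_of_ne_zero hY0
  have hrm : Y.rank < Fintype.card ι :=
    (rank_le_card_width Y).lt_of_ne fun h => hYu (isUnit_of_rank_eq_card h)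
  let ψ := (mulLeftLinearMap κ K Y).domRestrict C
  have hrange : finrank K (range ψ) ≤ Fintype.card κ * (Y.rank - (d - 1)) := by
    refine finrank_le_mul_of_lt_rank _ _ ?_ ?_
    · rintro _ ⟨M, rfl⟩
      simpa [ψ, mulVecLin_mul] using range_comp_le_range M.1.mulVecLin Y.mulVecLin
    · rintro _ ⟨M, rfl⟩ h0
      exact (Nat.sub_one_lt (by omega)).trans_le (hrank _ (hY M.1 M.2) h0)
  have hker : finrank K (ker ψ) ≤ Fintype.card κ * (Fintype.card ι - Y.rank - (d - 1)) := by
    rw [← Submodule.finrank_map_subtype_eq, ← finrank_ker_mulVecLin]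
    refine finrank_le_mul_of_lt_rank _ _ ?_ ?_
    · rintro _ ⟨M, hM, rfl⟩
      rw [range_le_ker_iff, ← mulVecLin_mul, Submodule.subtype_apply, show Y * M.1 = 0 from hM]
      exact LinearMap.ext fun v => zero_mulVec v
    · rintro _ ⟨M, -, rfl⟩ h0
      exact (Nat.sub_one_lt (by omega)).trans_le (hrank _ M.2 h0)
  have hcount : (Y.rank - (d - 1)) + (Fintype.card ι - Y.rank - (d - 1)) <
      Fintype.card ι - d + 1 := by
    omega
  have hlt := Nat.mul_lt_mul_of_pos_left hcount (Fintype.card_pos : 0 < Fintype.card κ)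
  have hsum := finrank_range_add_finrank_ker ψ
  rw [Nat.mul_add] at hlt
  omega

omit [Fintype κ] in
theorem card_le_of_forall_isUnit [Nonempty ι] [Finite K] (S : AddSubgroup (Matrix ι ι K))
    (h : ∀ Y ∈ S, Y ≠ 0 → IsUnit Y) : Nat.card S ≤ Nat.card K ^ Fintype.card ι := by
  obtain ⟨i⟩ := ‹Nonempty ι›
  have hinj : Function.Injective fun Y : S => Y.1 *ᵥ Pi.single i 1 := by
    intro Y Z hYZ
    by_contra hne
    have hu := h _ (S.sub_mem Y.2 Z.2) (sub_ne_zero.2 (Subtype.coe_ne_coe.2 hne))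
    have hv : (Y.1 - Z.1) *ᵥ Pi.single i 1 = (Y.1 - Z.1) *ᵥ 0 := by
      rw [sub_mulVec, mulVec_zero]
      exact sub_eq_zero.2 hYZ
    simpa using congrFun (mulVec_injective_iff_isUnit.2 hu hv) i
  simpa [Nat.card_fun] using Nat.card_le_card_of_injective _ hinj

end Matrix

open Matrix

theorem left_idealiser_is_field_general
    (q m n d : ℕ) (hmn : m ≤ n) (hd1 : 1 < d) (hdm : d ≤ m)
    (Fq : Type*) [Field Fq] [Fintype Fq] (hq : Fintype.card Fq = q)
    (C : Submodule Fq (Matrix (Fin m) (Fin n) Fq))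
    (hrank : ∀ M ∈ C, M ≠ 0 → d ≤ Matrix.rank M)
    (hdimC : Module.finrank Fq C = n * (m - d + 1)) :
    (∀ Y ∈ {Y : Matrix (Fin m) (Fin m) Fq | ∀ M ∈ C, Y * M ∈ C},
      ∀ Z ∈ {Y : Matrix (Fin m) (Fin m) Fq | ∀ M ∈ C, Y * M ∈ C}, Y * Z = Z * Y) ∧
    (∀ Y ∈ {Y : Matrix (Fin m) (Fin m) Fq | ∀ M ∈ C, Y * M ∈ C},
      Y ≠ 0 → IsUnit Y ∧ Y⁻¹ ∈ {Y : Matrix (Fin m) (Fin m) Fq | ∀ M ∈ C, Y * M ∈ C}) ∧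
    Set.ncard {Y : Matrix (Fin m) (Fin m) Fq | ∀ M ∈ C, Y * M ∈ C} ≤ q ^ m := by
  have : Nonempty (Fin m) := ⟨⟨0, by omega⟩⟩
  have : Nonempty (Fin n) := ⟨⟨0, by omega⟩⟩
  have hunit : ∀ Y ∈ leftIdealiser C, Y ≠ 0 → IsUnit Y := fun Y hY hY0 =>
    isUnit_of_mem_leftIdealiser hd1 hrank (by simpa using hdimC) hY hY0
  have hfield := (leftIdealiser C).isField_of_forall_isUnit hunit
  refine ⟨fun Y hY Z hZ => congrArg Subtype.val (hfield.mul_comm ⟨Y, hY⟩ ⟨Z, hZ⟩),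
    fun Y hY hY0 => ⟨hunit Y hY hY0, ?_⟩, ?_⟩
  · obtain ⟨Z, hYZ⟩ := hfield.mul_inv_cancel (a := ⟨Y, hY⟩) (by simpa [Subtype.ext_iff])
    rw [inv_eq_right_inv (congrArg Subtype.val hYZ)]
    exact Z.2
  · have hcard := card_le_of_forall_isUnit (leftIdealiser C).toAddSubgroup hunit
    rwa [Nat.card_eq_fintype_card (α := Fq), hq, Fintype.card_fin] at hcard

/-- the left idealiser of a linear MRD-code with `d > 1`, `m ≤ n`, is a
finite field of cardinality at most `q^m`. -/
theorem left_idealiser_is_field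
    (q m n d : ℕ) (hmn : m ≤ n) (hd1 : 1 < d) (hdm : d ≤ m)
    (Fq : Type*) [Field Fq] [Fintype Fq] [DecidableEq Fq] (hq : Fintype.card Fq = q)
    (C : Submodule Fq (Matrix (Fin m) (Fin n) Fq))
    (hrank : ∀ M ∈ C, M ≠ 0 → d ≤ Matrix.rank M)
    (hdimC : Module.finrank Fq C = n * (m - d + 1)) :
    (∀ Y ∈ {Y : Matrix (Fin m) (Fin m) Fq | ∀ M ∈ C, Y * M ∈ C},
      ∀ Z ∈ {Y : Matrix (Fin m) (Fin m) Fq | ∀ M ∈ C, Y * M ∈ C}, Y * Z = Z * Y) ∧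
    (∀ Y ∈ {Y : Matrix (Fin m) (Fin m) Fq | ∀ M ∈ C, Y * M ∈ C},
      Y ≠ 0 → IsUnit Y ∧ Y⁻¹ ∈ {Y : Matrix (Fin m) (Fin m) Fq | ∀ M ∈ C, Y * M ∈ C}) ∧
    Set.ncard {Y : Matrix (Fin m) (Fin m) Fq | ∀ M ∈ C, Y * M ∈ C} ≤ q ^ m :=
  left_idealiser_is_field_general q m n d hmn hd1 hdm Fq hq C hrank hdimC
end

section
/- Let f(x) = Σ_{i=0}^{n-1} a_i x^{q^i} be a q-polynomial over 𝔽_{q^n} regarded as 𝔽_q-linear map on 𝔽_{q^n}. Define C_f = {a f(x) + b x : a, b ∈ 𝔽_{q^n}} ⊆ End_{𝔽_q}(𝔽_{q^n}). Then every nonzero element of C_f has kernel of 𝔽_q-dimension at most 1 (equivalently C_f is an MRD-code with minimum distance n-1) if and only if U_f = {(x, f(x)) : x ∈ 𝔽_{q^n}} is a scattered 𝔽_q-subspace of 𝔽_{q^n} × 𝔽_{q^n}. -/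
/-!
For `(a, b) ≠ (0, 0)` the `𝔽_{q^n}`-line spanned by `(a, -b)` is the set of `(x, y)` with
`a y + b x = 0`, so the graph of `f` meets that line exactly in the image of `ker (a f + b)`
under the injective map `x ↦ (x, f x)`. Every nonzero `v` has the form `(a, -b)`, and the line
through `v = 0` is trivial.
-/

open Module LinearMap Submodule

theorem mem_span_singleton_pair_iff {K : Type*} [Field K] {a b : K} (hab : ¬(a = 0 ∧ b = 0))
    (x y : K) : (x, y) ∈ K ∙ (a, -b) ↔ a * y + b * x = 0 := by
  rw [mem_span_singleton]
  constructor
  · rintro ⟨l, hl⟩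
    simp only [Prod.smul_mk, smul_eq_mul, Prod.mk.injEq] at hl
    rw [← hl.1, ← hl.2]
    ring
  · intro h
    by_cases ha : a = 0
    · have hb : b ≠ 0 := fun hb => hab ⟨ha, hb⟩
      have hx : x = 0 := by simpa [ha, hb] using h
      exact ⟨-y / b, by simp [ha, hx, hb]⟩
    · refine ⟨x / a, ?_⟩
      simp only [Prod.smul_mk, smul_eq_mul, Prod.mk.injEq]
      constructor
      · field_simp
      · field_simp
        linear_combination -h

section

variable {F K : Type*} [Field F] [Field K] [Algebra F K]

theorem ker_mulLeft_comp_add_mulLeft_eq_comap (f : K →ₗ[F] K) {a b : K}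
    (hab : ¬(a = 0 ∧ b = 0)) :
    ker ((mulLeft F a).comp f + mulLeft F b) =
      ((K ∙ (a, -b)).restrictScalars F).comap (LinearMap.id.prod f) := by
  ext x
  simp [mem_span_singleton_pair_iff hab]

theorem finrank_graph_inf_span_eq_finrank_ker (f : K →ₗ[F] K) {a b : K}
    (hab : ¬(a = 0 ∧ b = 0)) :
    finrank F ↥(f.graph ⊓ (K ∙ (a, -b)).restrictScalars F) =
      finrank F (ker ((mulLeft F a).comp f + mulLeft F b)) := by
  have hinj : Function.Injective (LinearMap.id.prod f) := fun x y h => congrArg Prod.fst h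
  rw [graph_eq_range_prod, ← map_comap_eq, ker_mulLeft_comp_add_mulLeft_eq_comap f hab]
  exact (LinearEquiv.finrank_eq (Submodule.equivMapOfInjective _ hinj _)).symm

end

theorem sheekey_correspondence_general
    (Fq K : Type*) [Field Fq] [Field K] [Algebra Fq K]
    (f : K →ₗ[Fq] K)
    (U : Submodule Fq (K × K))
    (hU : (U : Set (K × K)) = {p | ∃ x : K, p = (x, f x)}) :
    (∀ a b : K, ¬(a = 0 ∧ b = 0) →
        Module.finrank Fq
          (LinearMap.ker ((LinearMap.mulLeft Fq a).comp f + LinearMap.mulLeft Fq b)) ≤ 1)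
      ↔
    (∀ v : K × K,
        Module.finrank Fq ↥(U ⊓ (Submodule.span K {v}).restrictScalars Fq) ≤ 1) := by
  obtain rfl : U = f.graph := SetLike.coe_injective <| hU.trans <| by
    ext ⟨x, y⟩
    simp [mem_graph_iff]
  constructor
  · rintro hC ⟨a, b⟩
    by_cases hv : a = 0 ∧ b = 0
    · obtain ⟨rfl, rfl⟩ := hv
      rw [Prod.mk_zero_zero, span_zero_singleton, restrictScalars_bot, inf_bot_eq, finrank_bot]
      exact zero_le_one
    · have hv' : ¬(a = 0 ∧ -b = 0) := by rwa [neg_eq_zero]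
      have hrank := finrank_graph_inf_span_eq_finrank_ker f hv'
      rw [neg_neg] at hrank
      rw [hrank]
      exact hC a (-b) hv'
  · intro hS a b hab
    rw [← finrank_graph_inf_span_eq_finrank_ker f hab]
    exact hS (a, -b)

/-- Sheekey: `C_f = {a f(x) + b x}` is an MRD-code with minimum distance
`n-1` (all nonzero elements have kernel of dimension at most 1) iff
`U_f = {(x, f(x))}` is scattered. -/
theorem sheekey_correspondence
    (q n : ℕ) (hn : 2 ≤ n)
    (Fq K : Type*) [Field Fq] [Field K] [Fintype Fq] [Fintype K] [Algebra Fq K]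
    (hq : Fintype.card Fq = q) (hK : Fintype.card K = q ^ n)
    (c : Fin n → K) (f : K →ₗ[Fq] K)
    (hf : ∀ x : K, f x = ∑ i : Fin n, c i * x ^ q ^ (i : ℕ))
    (U : Submodule Fq (K × K))
    (hU : (U : Set (K × K)) = {p | ∃ x : K, p = (x, f x)}) :
    (∀ a b : K, ¬(a = 0 ∧ b = 0) →
        Module.finrank Fq
          (LinearMap.ker ((LinearMap.mulLeft Fq a).comp f + LinearMap.mulLeft Fq b)) ≤ 1)
      ↔
    (∀ v : K × K,
        Module.finrank Fq ↥(U ⊓ (Submodule.span K {v}).restrictScalars Fq) ≤ 1) :=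
  sheekey_correspondence_general Fq K f U hU
end

section
/- Let C be an 𝔽_q-linear MRD-code of 𝔽_q-linear maps 𝔽_{q^n} → 𝔽_q^t with t ≥ n, minimum distance n - 1, whose right idealiser equals {τ_α : α ∈ 𝔽_{q^n}} (scalar multiplications of 𝔽_{q^n}), and let r = dim of C as a right 𝔽_{q^n}-space. Then the subset U = {f ∈ C : f(1) = 0} is a scattered 𝔽_q-subspace of the r-dimensional right 𝔽_{q^n}-vector space C. -/
/-!
If `f ∈ U` is nonzero, then `ker f` contains `1` and has dimension at most one, so it is the
line `𝔽_q · 1`. A map `f ∘ τ_α` lies in `U` exactly when `f α = 0`, i.e. when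
`α ∈ 𝔽_q`, and then `f ∘ τ_α = α • f` with `α` a scalar of `𝔽_q`; hence `U` meets the `𝔽_{q^n}`-line of `f` only in `𝔽_q f`.
-/

section

open LinearMap Module Submodule

variable {F K M : Type*} [Field F] [Ring K] [Algebra F K] [AddCommGroup M] [Module F M]

theorem LinearMap.ker_eq_span_one_of_finrank_ker_le_one [FiniteDimensional F K] [Nontrivial K]
    {f : K →ₗ[F] M} (hf1 : f 1 = 0) (hker : finrank F (ker f) ≤ 1) : ker f = F ∙ 1 :=
  (eq_of_le_of_finrank_le (span_singleton_le_iff_mem _ _ |>.mpr hf1)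
    (by rwa [finrank_span_singleton one_ne_zero])).symm

theorem LinearMap.comp_lmul_algebraMap (f : K →ₗ[F] M) (c : F) :
    f ∘ₗ Algebra.lmul F K (algebraMap F K c) = c • f := by
  ext x
  simp

theorem Submodule.inf_range_llcomp_comp_lmul_eq_span_singleton
    {U : Submodule F (K →ₗ[F] M)} {f : K →ₗ[F] M} (hfU : f ∈ U)
    (hU : ∀ g ∈ U, g 1 = 0) (hker : ker f ≤ F ∙ 1) :
    U ⊓ range (llcomp F K K M f ∘ₗ (Algebra.lmul F K).toLinearMap) = F ∙ f := by
  apply le_antisymm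
  · rintro _ ⟨hgU, α, rfl⟩
    have hα : f α = 0 := by simpa using hU _ hgU
    obtain ⟨c, rfl⟩ := mem_span_singleton.mp (hker hα)
    rw [← Algebra.algebraMap_eq_smul_one]
    exact mem_span_singleton.mpr ⟨c, (f.comp_lmul_algebraMap c).symm⟩
  · refine span_le.mpr (Set.singleton_subset_iff.mpr ⟨hfU, 1, ?_⟩)
    ext x
    simp

end

theorem scattered_from_MRD_general
    (t : ℕ)
    (Fq K : Type*) [Field Fq] [Field K] [Fintype K] [Algebra Fq K]
    (C : Submodule Fq (K →ₗ[Fq] (Fin t → Fq)))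
    (hmin : ∀ f ∈ C, f ≠ 0 → Module.finrank Fq (LinearMap.ker f) ≤ 1)
    (U : Submodule Fq (K →ₗ[Fq] (Fin t → Fq)))
    (hU : (U : Set (K →ₗ[Fq] (Fin t → Fq))) = {f | f ∈ C ∧ f 1 = 0}) :
    ∀ f ∈ U, f ≠ 0 →
      Module.finrank Fq
        ↥(U ⊓ LinearMap.range
            ((LinearMap.llcomp Fq K K (Fin t → Fq) f) ∘ₗ
              (Algebra.lmul Fq K).toLinearMap)) = 1 := by
  have mem_U : ∀ g, g ∈ U ↔ g ∈ C ∧ g 1 = 0 := fun g => Set.ext_iff.mp hU g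
  intro f hfU hf0
  have : FiniteDimensional Fq K := Module.Finite.of_finite
  obtain ⟨hfC, hf1⟩ := (mem_U f).mp hfU
  have hker := LinearMap.ker_eq_span_one_of_finrank_ker_le_one hf1 (hmin f hfC hf0)
  rw [Submodule.inf_range_llcomp_comp_lmul_eq_span_singleton hfU
    (fun g hg => ((mem_U g).mp hg).2) hker.le, finrank_span_singleton hf0]

/-- from an MRD-code with parameters `(t, n, q; n-1)` and right idealiser
`{τ_α : α ∈ 𝔽_{q^n}}`, the set `U = {f ∈ C : f 1 = 0}` is a scattered `𝔽_q`-subspace of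
the right `𝔽_{q^n}`-vector space `C`. -/
theorem scattered_from_MRD
    (q n t : ℕ) (hn : 2 ≤ n) (htn : n ≤ t)
    (Fq K : Type*) [Field Fq] [Field K] [Fintype Fq] [Fintype K] [Algebra Fq K]
    (hq : Fintype.card Fq = q) (hK : Fintype.card K = q ^ n)
    (C : Submodule Fq (K →ₗ[Fq] (Fin t → Fq)))
    (hidealiser : {φ : K →ₗ[Fq] K | ∀ f ∈ C, f ∘ₗ φ ∈ C}
        = Set.range (fun α : K => (Algebra.lmul Fq K).toLinearMap α))
    (hmin : ∀ f ∈ C, f ≠ 0 → Module.finrank Fq (LinearMap.ker f) ≤ 1)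
    (hMRD : Set.ncard (C : Set (K →ₗ[Fq] (Fin t → Fq))) = q ^ (2 * t))
    (U : Submodule Fq (K →ₗ[Fq] (Fin t → Fq)))
    (hU : (U : Set (K →ₗ[Fq] (Fin t → Fq))) = {f | f ∈ C ∧ f 1 = 0}) :
    ∀ f ∈ U, f ≠ 0 →
      Module.finrank Fq
        ↥(U ⊓ LinearMap.range
            ((LinearMap.llcomp Fq K K (Fin t → Fq) f) ∘ₗ
              (Algebra.lmul Fq K).toLinearMap)) = 1 :=
  scattered_from_MRD_general t Fq K C hmin U hU
end

section
/- Let n ≥ 2, gcd(s, n) = 1, 1 ≤ k ≤ n-1, and let G_{k,s} = {a_0 x + a_1 x^{q^s} + ⋯ + a_{k-1} x^{q^{s(k-1)}} : a_i ∈ 𝔽_{q^n}} be the generalized Gabidulin code, viewed as a set of 𝔽_q-linear endomorphisms of 𝔽_{q^n}. Then every nonzero element of G_{k,s} has rank at least n - k + 1, i.e., kernel of 𝔽_q-dimension at most k - 1. -/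
open Polynomial

/-- Elements of `K` fixed by `z ↦ z ^ q` lie in the image of `Fq`. -/
lemma fixed_mem_range {q : ℕ} (Fq K : Type*) [Field Fq] [Field K] [Fintype Fq] [Fintype K]
    [Algebra Fq K] (hq : Fintype.card Fq = q) (z : K) (hz : z ^ q = z) :
    ∃ b : Fq, algebraMap Fq K b = z := by
  classical
  have h1q : 1 < q := hq ▸ Fintype.one_lt_card
  set P : K[X] := X ^ q - X with hP
  have hPne : P ≠ 0 := FiniteField.X_pow_card_sub_X_ne_zero K h1q
  have hdeg : P.natDegree = q := FiniteField.X_pow_card_sub_X_natDegree_eq K h1q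
  have hroot : ∀ w : K, w ^ q = w → w ∈ P.roots.toFinset := by
    intro w hw
    rw [Multiset.mem_toFinset, mem_roots hPne]
    simp only [Multiset.mem_toFinset, mem_roots hPne, IsRoot.def, hP, eval_sub, eval_pow,
      eval_X, hw, sub_self]
  set F : Finset K := Finset.univ.image (algebraMap Fq K) with hF
  have hFsub : F ⊆ P.roots.toFinset := by
    intro w hw
    simp only [hF, Finset.mem_image] at hw
    obtain ⟨b, -, rfl⟩ := hw
    exact hroot _ (by rw [← map_pow, ← hq, FiniteField.pow_card])
  have hFcard : F.card = q := by
    rw [hF, Finset.card_image_of_injective _ (algebraMap Fq K).injective, Finset.card_univ, hq]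
  have hRcard : P.roots.toFinset.card ≤ q := by
    calc P.roots.toFinset.card ≤ Multiset.card P.roots := P.roots.toFinset_card_le
    _ ≤ P.natDegree := P.card_roots'
    _ = q := hdeg
  have heq : F = P.roots.toFinset :=
    Finset.eq_of_subset_of_card_le hFsub (hRcard.trans_eq hFcard.symm)
  have : z ∈ F := heq ▸ hroot z hz
  simp only [hF, Finset.mem_image] at this
  obtain ⟨b, -, hb⟩ := this
  exact ⟨b, hb⟩

/-- Artin-style independence: if `x` is `Fq`-linearly independent, then the "Moore rows"
are `K`-linearly independent. -/
lemma moore_rows_linearIndependent {r : ℕ} (Fq K : Type*) [Field Fq] [Field K]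
    [Algebra Fq K]
    (σ : K →+* K) (hσ : ∀ z : K, σ z = z ^ r)
    (hfix : ∀ z : K, z ^ r = z → ∃ b : Fq, algebraMap Fq K b = z)
    (hb : ∀ b : Fq, (algebraMap Fq K b) ^ r = algebraMap Fq K b) :
    ∀ (m : ℕ) (x : Fin m → K), LinearIndependent Fq x →
      LinearIndependent K (fun i : Fin m => fun j : Fin m => x i ^ r ^ (j : ℕ)) := by
  have hσlin : ∀ (b : Fq) (z : K), σ (b • z) = b • σ z := by
    intro b z
    rw [Algebra.smul_def, Algebra.smul_def, map_mul, hσ (algebraMap Fq K b), hb]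
  intro m
  induction m with
  | zero => intro x _; exact linearIndependent_empty_type
  | succ m ih =>
    intro x hx
    have hxc : LinearIndependent Fq (fun i : Fin m => x i.castSucc) :=
      hx.comp Fin.castSucc (Fin.castSucc_injective m)
    have key : ∀ c : Fin (m + 1) → K,
        (∑ i, c i • fun j : Fin (m + 1) => x i ^ r ^ (j : ℕ)) = 0 →
          c (Fin.last m) ≠ 0 → False := by
      intro c hc hlast
      set c' : Fin (m + 1) → K := fun i => c i * (c (Fin.last m))⁻¹ with hc'
      have hE : ∀ j : Fin (m + 1), ∑ i, c' i * x i ^ r ^ (j : ℕ) = 0 := by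
        intro j
        have h0 := congrFun hc j
        simp only [Finset.sum_apply, Pi.smul_apply, smul_eq_mul, Pi.zero_apply] at h0
        have h1 : (∑ i, c i * x i ^ r ^ (j : ℕ)) * (c (Fin.last m))⁻¹ = 0 := by
          rw [h0, zero_mul]
        rw [Finset.sum_mul] at h1
        rw [← h1]
        exact Finset.sum_congr rfl fun i _ => by ring
      have hc'last : c' (Fin.last m) = 1 := mul_inv_cancel₀ hlast
      set d : Fin (m + 1) → K := fun i => σ (c' i) - c' i with hd
      have hD : ∀ j : Fin m, ∑ i, d i * (x i ^ r) ^ r ^ (j : ℕ) = 0 := by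
        intro j
        have h1 : σ (∑ i, c' i * x i ^ r ^ ((j : ℕ))) = 0 := by
          rw [hE ⟨(j : ℕ), by omega⟩]; exact map_zero σ
        rw [map_sum] at h1
        simp only [map_mul, hσ (x _ ^ r ^ (j : ℕ)), ← pow_mul, ← pow_succ] at h1
        have h2 : ∑ i, c' i * x i ^ r ^ ((j : ℕ) + 1) = 0 := by
          simpa using hE ⟨(j : ℕ) + 1, by omega⟩
        have h3 : ∑ i, (σ (c' i) - c' i) * x i ^ r ^ ((j : ℕ) + 1) = 0 := by
          rw [Finset.sum_congr rfl (fun i _ => sub_mul (σ (c' i)) (c' i) _),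
            Finset.sum_sub_distrib, h1, h2, sub_zero]
        rw [← h3]
        exact Finset.sum_congr rfl fun i _ => by rw [← pow_mul, ← pow_succ']
      have hdlast : d (Fin.last m) = 0 := by
        simp [hd, hc'last, map_one]
      have hy : LinearIndependent Fq (fun i : Fin m => x i.castSucc ^ r) := by
        let σL : K →ₗ[Fq] K := { toFun := σ, map_add' := map_add σ, map_smul' := hσlin }
        have := hxc.map' σL (LinearMap.ker_eq_bot.mpr (σ.injective : Function.Injective σL))
        simpa only [σL, Function.comp_def, LinearMap.coe_mk, AddHom.coe_mk, hσ] using this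
      have hdz : ∀ i : Fin m, d i.castSucc = 0 := by
        refine Fintype.linearIndependent_iff.mp
          (ih (fun i : Fin m => x i.castSucc ^ r) hy) (fun i => d i.castSucc) ?_
        ext j
        simp only [Finset.sum_apply, Pi.smul_apply, smul_eq_mul, Pi.zero_apply]
        have h4 := hD j
        rw [Fin.sum_univ_castSucc, hdlast, zero_mul, add_zero] at h4
        exact h4
      have hdall : ∀ i : Fin (m + 1), d i = 0 := by
        intro i
        rcases Fin.eq_castSucc_or_eq_last i with ⟨j, rfl⟩ | rfl
        · exact hdz j
        · exact hdlast
      have hfixall : ∀ i, ∃ b : Fq, algebraMap Fq K b = c' i := by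
        intro i
        apply hfix
        have h5 : σ (c' i) = c' i := sub_eq_zero.mp (hdall i)
        rwa [hσ] at h5
      choose b hbspec using hfixall
      have hbrel : ∑ i, b i • x i = 0 := by
        have h0 := hE 0
        simp only [Fin.val_zero, pow_zero, pow_one] at h0
        rw [← h0]
        exact Finset.sum_congr rfl fun i _ => by
          rw [Algebra.smul_def, hbspec]
      have hbz := Fintype.linearIndependent_iff.mp hx b hbrel (Fin.last m)
      have : (1 : K) = 0 := by
        rw [← hc'last, ← hbspec, hbz, map_zero]
      exact one_ne_zero this
    rw [Fintype.linearIndependent_iff]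
    intro c hc
    by_cases hlast : c (Fin.last m) = 0
    · have hcz : ∀ i : Fin m, c i.castSucc = 0 := by
        refine Fintype.linearIndependent_iff.mp
          (ih (fun i : Fin m => x i.castSucc) hxc) (fun i => c i.castSucc) ?_
        ext j
        have h0 := congrFun hc j.castSucc
        simp only [Finset.sum_apply, Pi.smul_apply, smul_eq_mul, Pi.zero_apply] at h0 ⊢
        rw [Fin.sum_univ_castSucc, hlast, zero_mul, add_zero] at h0
        simpa using h0
      intro i
      rcases Fin.eq_castSucc_or_eq_last i with ⟨j, rfl⟩ | rfl
      · exact hcz j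
      · exact hlast
    · exact (key c hc hlast).elim

/-- nonzero elements of the generalized Gabidulin code `G_{k,s}` have
kernel of `𝔽_q`-dimension at most `k - 1`. -/
theorem gabidulin_code_MRD
    (q n k s : ℕ) (hn : 2 ≤ n) (hgcd : Nat.gcd s n = 1) (hk1 : 1 ≤ k) (hkn : k ≤ n - 1)
    (Fq K : Type*) [Field Fq] [Field K] [Fintype Fq] [Fintype K] [Algebra Fq K]
    (hq : Fintype.card Fq = q) (hK : Fintype.card K = q ^ n)
    (a : Fin k → K) (ha : a ≠ 0) (φ : K →ₗ[Fq] K)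
    (hφ : ∀ x : K, φ x = ∑ i : Fin k, a i * x ^ q ^ (s * (i : ℕ))) :
    Module.finrank Fq (LinearMap.ker φ) ≤ k - 1 := by
  classical
  set p := ringChar Fq with hpdef
  haveI : CharP Fq p := ringChar.charP Fq
  obtain ⟨e, hpprime, he⟩ := FiniteField.card Fq p
  haveI : Fact p.Prime := ⟨hpprime⟩
  haveI : CharP K p := charP_of_injective_algebraMap (algebraMap Fq K).injective p
  set r := q ^ s with hr
  set σ : K →+* K := iterateFrobenius K p ((e : ℕ) * s) with hσdef
  have hσ : ∀ z : K, σ z = z ^ r := by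
    intro z
    rw [hσdef, iterateFrobenius_def, hr, ← hq, he, ← pow_mul]
  have hb : ∀ b : Fq, (algebraMap Fq K b) ^ r = algebraMap Fq K b := by
    intro b
    rw [← map_pow, hr, ← hq, FiniteField.pow_card_pow]
  have hfix : ∀ z : K, z ^ r = z → ∃ b : Fq, algebraMap Fq K b = z := by
    intro z hz
    apply fixed_mem_range Fq K hq
    obtain ⟨u, -, hu⟩ := Nat.exists_mul_mod_eq_one_of_coprime hgcd (by omega)
    have hsu : ∀ t : ℕ, z ^ q ^ (s * t) = z := by
      intro t
      induction t with
      | zero => simp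
      | succ t iht => rw [Nat.mul_succ, pow_add, pow_mul, iht, ← hr, hz]
    have hnv : ∀ v : ℕ, z ^ q ^ (n * v) = z := by
      intro v
      rw [pow_mul, ← hK, FiniteField.pow_card_pow]
    have hdm : s * u = n * (s * u / n) + 1 := by
      conv_lhs => rw [← Nat.div_add_mod (s * u) n]
      rw [hu]
    have h1 : z ^ q ^ (s * u) = z := hsu u
    rw [hdm, pow_add, pow_mul, hnv, pow_one] at h1
    exact h1
  by_contra hcon
  push_neg at hcon
  have hk : k ≤ Module.finrank Fq (LinearMap.ker φ) := by omega
  obtain ⟨f, hf⟩ := exists_linearIndependent_of_le_finrank hk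
  set x : Fin k → K := fun i => (f i : K) with hx
  have hxind : LinearIndependent Fq x := by
    have := hf.map' (LinearMap.ker φ).subtype (Submodule.ker_subtype _)
    simpa [hx, Function.comp_def] using this
  have hmoore := moore_rows_linearIndependent Fq K σ hσ hfix hb k x hxind
  set M : Matrix (Fin k) (Fin k) K := Matrix.of fun i j => x i ^ r ^ (j : ℕ) with hM
  have hrows : LinearIndependent K (fun i => M i) := hmoore
  have hcols : LinearIndependent K (fun j => M.transpose j) :=
    Matrix.linearIndependent_cols_iff_isUnit.mpr
      (Matrix.linearIndependent_rows_iff_isUnit.mp hrows)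
  have hrel : (∑ j, a j • M.transpose j) = 0 := by
    ext i
    simp only [Finset.sum_apply, Pi.smul_apply, smul_eq_mul, Pi.zero_apply, hM,
      Matrix.transpose_apply, Matrix.of_apply]
    have hker : φ (x i) = 0 := (f i).2
    rw [hφ (x i)] at hker
    rw [← hker]
    exact Finset.sum_congr rfl fun j _ => by rw [hr, ← pow_mul]
  have haz := Fintype.linearIndependent_iff.mp hcols a hrel
  exact ha (funext haz)
end

section
/- Let n ≥ 2, 1 ≤ k ≤ n-1, gcd(s,n) = 1, and η ∈ 𝔽_{q^n} with N_{q^n/q}(η) ≠ (-1)^{nk}, where N_{q^n/q} is the norm map from 𝔽_{q^n} to 𝔽_q. Then every nonzero element of the generalized twisted Gabidulin code H_{k,s}(η, h) = {a_0 x + a_1 x^{q^s} + ⋯ + a_{k-1} x^{q^{s(k-1)}} + η a_0^{q^{sh}} x^{q^{sk}} : a_0,…,a_{k-1} ∈ 𝔽_{q^n}}, viewed as an 𝔽_q-linear endomorphism of 𝔽_{q^n}, has kernel of 𝔽_q-dimension at most k - 1. -/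
/-!
Let `σ = Frob^s`; since `gcd(s, n) = 1` it generates `Gal(𝔽_{q^n}/𝔽_q)`, so its fixed field is
`𝔽_q`. A nonzero `σ`-polynomial `∑_{i<m} cᵢ σⁱ` cannot vanish on `m` independent vectors: rescale
so that `1` is among them, then the polynomial is divisible by `σ - 1` and induction applies to the
quotient on the `m - 1` independent vectors `σ v - v`. Hence if the kernel of the code element had
`k` independent vectors `uⱼ`, their Moore matrix `M = (σⁱ uⱼ)` would be invertible. The kernel
equations read `M a = -η σʰ(a₀) (σᵏ uⱼ)ⱼ`, forcing `a₀ ≠ 0`, and Cramer's rule for `a₀`, together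
with `σ(M)` being `M` with first column `(σᵏ uⱼ)ⱼ` and rotated columns, gives
`det M · a₀ = (-1)ᵏ η σʰ(a₀) σ(det M)`. Taking norms yields `N(η) = (-1)^{nk}`.
-/

open Finset Matrix

section Moore

variable {F K : Type*} [Field F] [Field K] [Algebra F K]

theorem linearIndependent_apply_sub_self {σ : K ≃ₐ[F] K}
    (hσ : ∀ x, σ x = x → x ∈ Set.range (algebraMap F K)) {m : ℕ} {v : Fin (m + 1) → K}
    (hv : LinearIndependent F v) (hlast : v (Fin.last m) = 1) :
    LinearIndependent F fun j : Fin m ↦ σ (v j.castSucc) - v j.castSucc := by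
  have hker : LinearMap.ker (σ.toLinearMap - LinearMap.id) ≤
      Submodule.span F (v '' {Fin.last m}) := by
    intro x hx
    obtain ⟨c, rfl⟩ := hσ x (sub_eq_zero.1 hx)
    rw [Set.image_singleton, hlast, Submodule.mem_span_singleton]
    exact ⟨c, (Algebra.algebraMap_eq_smul_one c).symm⟩
  have hdisj := hv.disjoint_span_image (s := Set.range Fin.castSucc) (t := {Fin.last m})
    (Set.disjoint_singleton_right.2 fun ⟨j, hj⟩ ↦ Fin.castSucc_ne_last j hj)
  rw [← Set.range_comp] at hdisj
  exact (hv.comp _ (Fin.castSucc_injective m)).map (hdisj.mono_right hker)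

theorem sum_mul_pow_apply_eq_sub_sum_mul_pow_apply_sub (σ : K ≃ₐ[F] K) (c : ℕ → K) (m : ℕ)
    (x : K) :
    ∑ i ∈ range (m + 1), c i * (σ ^ i) x = (∑ t ∈ range (m + 1), c t) * (σ ^ m) x -
      ∑ i ∈ range m, (∑ t ∈ range (i + 1), c t) * (σ ^ i) (σ x - x) := by
  have hparts := sum_range_by_parts (fun i ↦ (σ ^ i) x) c (m + 1)
  simp only [smul_eq_mul, add_tsub_cancel_right] at hparts
  simp only [mul_comm (c _), hparts, mul_comm (∑ t ∈ range _, c t), map_sub, ← AlgEquiv.mul_apply,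
    ← pow_succ]

theorem eq_zero_of_sum_mul_pow_apply_eq_zero {σ : K ≃ₐ[F] K}
    (hσ : ∀ x, σ x = x → x ∈ Set.range (algebraMap F K)) {m : ℕ} {u : Fin m → K}
    (hu : LinearIndependent F u) {c : ℕ → K}
    (hc : ∀ j, ∑ i ∈ range m, c i * (σ ^ i) (u j) = 0) : ∀ i < m, c i = 0 := by
  induction m generalizing c with
  | zero => simp
  | succ m ih =>
    set L := u (Fin.last m)
    have hL : L ≠ 0 := hu.ne_zero _
    have hσL : ∀ i, (σ ^ i) L ≠ 0 := fun i ↦ (map_ne_zero _).2 hL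
    -- rescale so that the last vector becomes `1`, which lies in the kernel of `σ - 1`
    set v : Fin (m + 1) → K := fun j ↦ L⁻¹ * u j
    have hv1 : v (Fin.last m) = 1 := inv_mul_cancel₀ hL
    have hv : LinearIndependent F v := hu.map' (LinearMap.mulLeft F L⁻¹)
      (LinearMap.ker_eq_bot.2 (mul_right_injective₀ (inv_ne_zero hL)))
    set c' : ℕ → K := fun i ↦ c i * (σ ^ i) L
    set G : ℕ → K := fun i ↦ ∑ t ∈ range i, c' t
    have hc' : ∀ j, ∑ i ∈ range (m + 1), c' i * (σ ^ i) (v j) = 0 := fun j ↦ by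
      rw [← hc j]
      refine sum_congr rfl fun i _ ↦ ?_
      simp only [c', v, map_mul, map_inv₀, mul_assoc, mul_inv_cancel_left₀ (hσL i)]
    have hGtop : G (m + 1) = 0 := by simpa [hv1] using hc' (Fin.last m)
    have hG : ∀ i < m, G (i + 1) = 0 := by
      refine ih (linearIndependent_apply_sub_self hσ hv hv1) fun j ↦ ?_
      have := sum_mul_pow_apply_eq_sub_sum_mul_pow_apply_sub σ c' m (v j.castSucc)
      rwa [hc', show ∑ t ∈ range (m + 1), c' t = 0 from hGtop, zero_mul, zero_sub,
        zero_eq_neg] at this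
    have hG' : ∀ i ≤ m + 1, G i = 0
      | 0, _ => sum_range_zero c'
      | i + 1, hi => (Nat.lt_or_eq_of_le (Nat.le_of_succ_le_succ hi)).elim (hG i) (· ▸ hGtop)
    intro i hi
    have hc'i : c' i = G (i + 1) - G i := (sum_range_succ_sub_sum c').symm
    rw [hG' (i + 1) hi, hG' i hi.le, sub_zero] at hc'i
    exact (mul_eq_zero.1 hc'i).resolve_right (hσL i)

def mooreMatrix (σ : K ≃ₐ[F] K) {m : ℕ} (u : Fin m → K) : Matrix (Fin m) (Fin m) K :=
  Matrix.of fun j i ↦ (σ ^ (i : ℕ)) (u j)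

theorem det_mooreMatrix_ne_zero {σ : K ≃ₐ[F] K}
    (hσ : ∀ x, σ x = x → x ∈ Set.range (algebraMap F K)) {m : ℕ} {u : Fin m → K}
    (hu : LinearIndependent F u) : (mooreMatrix σ u).det ≠ 0 := by
  intro hdet
  obtain ⟨c, hc0, hc⟩ := exists_mulVec_eq_zero_iff.2 hdet
  let c' : ℕ → K := fun i ↦ if h : i < m then c ⟨i, h⟩ else 0
  have hc' : ∀ j, ∑ i ∈ range m, c' i * (σ ^ i) (u j) = 0 := fun j ↦ by
    rw [← Fin.sum_univ_eq_sum_range (fun i ↦ c' i * (σ ^ i) (u j))]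
    simpa [c', mooreMatrix, mulVec, dotProduct, mul_comm] using congrFun hc j
  exact hc0 (funext fun i ↦ by
    simpa [c'] using eq_zero_of_sum_mul_pow_apply_eq_zero hσ hu hc' i i.2)

theorem det_updateCol_zero_mooreMatrix (σ : K ≃ₐ[F] K) {m : ℕ} (u : Fin (m + 1) → K) :
    ((mooreMatrix σ u).updateCol 0 fun j ↦ (σ ^ (m + 1)) (u j)).det =
      (-1) ^ m * σ (mooreMatrix σ u).det := by
  have hrot : σ.mapMatrix (mooreMatrix σ u) =
      ((mooreMatrix σ u).updateCol 0 fun j ↦ (σ ^ (m + 1)) (u j)).submatrix id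
        (finRotate (m + 1)) := by
    ext j i
    induction i using Fin.lastCases with
    | last => simp [mooreMatrix, Function.iterate_succ_apply']
    | cast i => simp [mooreMatrix, Function.iterate_succ_apply', Fin.succ_ne_zero]
  rw [AlgEquiv.map_det, hrot, det_permute', sign_finRotate, ← mul_assoc]
  simp [← mul_pow]

end Moore

theorem Matrix.det_mul_apply_eq_det_updateCol {n R : Type*} [Fintype n] [DecidableEq n]
    [CommRing R] (A : Matrix n n R) (x : n → R) (i : n) :
    A.det * x i = (A.updateCol i (A *ᵥ x)).det := by
  rw [← cramer_apply, cramer_eq_adjugate_mulVec, mulVec_mulVec, adjugate_mul, smul_mulVec,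
    one_mulVec, Pi.smul_apply, smul_eq_mul]

theorem IsGalois.mem_range_algebraMap_of_zpowers_eq_top {F E : Type*} [Field F] [Field E]
    [Algebra F E] [FiniteDimensional F E] [IsGalois F E] {σ : Gal(E/F)}
    (hσ : Subgroup.zpowers σ = ⊤) {x : E} (hx : σ x = x) : x ∈ Set.range (algebraMap F E) :=
  (IsGalois.mem_range_algebraMap_iff_fixed x).2 fun g ↦
    (Subgroup.zpowers_le.2 (show σ ∈ MulAction.stabilizer Gal(E/F) x from hx))
      (hσ ▸ Subgroup.mem_top g)

theorem FiniteField.zpowers_frobeniusAlgEquivOfAlgebraic_pow_eq_top (K L : Type*) [Field K]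
    [Fintype K] [Field L] [Finite L] [Algebra K L] {s : ℕ}
    (hs : s.Coprime (Module.finrank K L)) :
    Subgroup.zpowers (frobeniusAlgEquivOfAlgebraic K L ^ s) = ⊤ := by
  have hord := orderOf_frobeniusAlgEquivOfAlgebraic K L
  rw [← Subgroup.card_eq_iff_eq_top, Nat.card_zpowers, Nat.Coprime.orderOf_pow (hord ▸ hs.symm),
    hord, IsGalois.card_aut_eq_finrank]

theorem Algebra.norm_eq_neg_one_pow_of_mul_eq {F K : Type*} [Field F] [Field K] [Algebra F K]
    [FiniteDimensional F K] (σ τ : K ≃ₐ[F] K) {η x y : K} (hx : x ≠ 0) (hy : y ≠ 0) (k : ℕ)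
    (h : x * y = (-1) ^ k * (η * τ y * σ x)) :
    Algebra.norm F η = (-1) ^ (Module.finrank F K * k) := by
  have hneg : Algebra.norm F (-1 : K) = (-1) ^ Module.finrank F K := by
    simpa using Algebra.norm_algebraMap (S := K) (-1 : F)
  have hnorm := congrArg (Algebra.norm F) h
  simp only [map_mul, map_pow, hneg, Algebra.norm_eq_of_algEquiv] at hnorm
  have hsq : ((-1 : F) ^ (Module.finrank F K * k)) ^ 2 = 1 := by
    rw [← pow_mul, pow_mul', neg_one_sq, one_pow]
  rw [pow_mul] at hsq ⊢
  refine mul_right_cancel₀ (mul_ne_zero (norm_ne_zero_iff.2 hy) (norm_ne_zero_iff.2 hx)) ?_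
  linear_combination -((-1) ^ Module.finrank F K) ^ k * hnorm -
    Algebra.norm F η * Algebra.norm F y * Algebra.norm F x * hsq

theorem twisted_gabidulin_code_MRD_general
    (q n k s h : ℕ) (hk1 : 1 ≤ k)
    (hgcd : Nat.gcd s n = 1)
    (Fq K : Type*) [Field Fq] [Field K] [Fintype Fq] [Fintype K] [Algebra Fq K]
    (hq : Fintype.card Fq = q) (hK : Fintype.card K = q ^ n)
    (η : K) (hη : η ^ ((q ^ n - 1) / (q - 1)) ≠ (-1 : K) ^ (n * k))
    (a : Fin k → K) (ha : a ≠ 0) (φ : K →ₗ[Fq] K)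
    (hφ : ∀ x : K, φ x = (∑ i : Fin k, a i * x ^ q ^ (s * (i : ℕ)))
        + η * (a ⟨0, hk1⟩) ^ q ^ (s * h) * x ^ q ^ (s * k)) :
    Module.finrank Fq (LinearMap.ker φ) ≤ k - 1 := by
  obtain ⟨m, rfl⟩ : ∃ m, k = m + 1 := ⟨k - 1, by omega⟩
  have hn : Module.finrank Fq K = n :=
    Nat.pow_right_injective (hq ▸ Fintype.one_lt_card : 2 ≤ q) <| by
      show q ^ _ = q ^ n
      rw [← hK, Module.card_eq_pow_finrank (K := Fq) (V := K), hq]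
  set σ := FiniteField.frobeniusAlgEquivOfAlgebraic Fq K ^ s
  have hσ : ∀ t x, (σ ^ t) x = x ^ q ^ (s * t) := fun t x ↦ by
    rw [← pow_mul, AlgEquiv.coe_pow, FiniteField.coe_frobeniusAlgEquivOfAlgebraic_iterate, hq]
  have hfix : ∀ x, σ x = x → x ∈ Set.range (algebraMap Fq K) := fun x ↦
    IsGalois.mem_range_algebraMap_of_zpowers_eq_top
      (FiniteField.zpowers_frobeniusAlgEquivOfAlgebraic_pow_eq_top Fq K (hn ▸ hgcd))
  by_contra! hdim
  obtain ⟨u, hu⟩ := exists_linearIndependent_of_le_finrank (R := Fq) (M := LinearMap.ker φ)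
    (n := m + 1) (by omega)
  set M := mooreMatrix σ fun j ↦ (u j : K)
  have hM : M *ᵥ a = (-(η * (σ ^ h) (a 0))) • fun j ↦ (σ ^ (m + 1)) (u j) := by
    ext j
    have h0 : φ (u j) = 0 := (u j).2
    rw [hφ, Fin.zero_eta] at h0
    simp only [M, mooreMatrix, mulVec, dotProduct, of_apply, hσ, Pi.smul_apply, smul_eq_mul,
      mul_comm _ (a _)]
    linear_combination h0
  have hdet : M.det ≠ 0 := det_mooreMatrix_ne_zero hfix (hu.map' _ (Submodule.ker_subtype _))
  have ha0 : a 0 ≠ 0 := fun h0 ↦ ha <| eq_zero_of_mulVec_eq_zero hdet <| by simp [hM, h0]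
  have hkey : M.det * a 0 = (-1) ^ (m + 1) * (η * (σ ^ h) (a 0) * σ M.det) := by
    rw [det_mul_apply_eq_det_updateCol, hM, det_updateCol_smul, det_updateCol_zero_mooreMatrix]
    ring
  have hNη := Algebra.norm_eq_neg_one_pow_of_mul_eq σ (σ ^ h) hdet ha0 (m + 1) hkey
  have hpow := FiniteField.algebraMap_norm_eq_pow (K := Fq) (x := η)
  rw [Nat.card_eq_fintype_card, Nat.card_eq_fintype_card, hK, hq, hNη, hn] at hpow
  exact hη (by simp [← hpow])

/-- nonzero elements of the generalized twisted Gabidulin code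
`H_{k,s}(η,h)` have kernel of `𝔽_q`-dimension at most `k - 1`. -/
theorem twisted_gabidulin_code_MRD
    (q n k s h : ℕ) (hn : 2 ≤ n) (hk1 : 1 ≤ k) (hkn : k ≤ n - 1)
    (hgcd : Nat.gcd s n = 1)
    (Fq K : Type*) [Field Fq] [Field K] [Fintype Fq] [Fintype K] [Algebra Fq K]
    (hq : Fintype.card Fq = q) (hK : Fintype.card K = q ^ n)
    (η : K) (hη : η ^ ((q ^ n - 1) / (q - 1)) ≠ (-1 : K) ^ (n * k))
    (a : Fin k → K) (ha : a ≠ 0) (φ : K →ₗ[Fq] K)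
    (hφ : ∀ x : K, φ x = (∑ i : Fin k, a i * x ^ q ^ (s * (i : ℕ)))
        + η * (a ⟨0, hk1⟩) ^ q ^ (s * h) * x ^ q ^ (s * k)) :
    Module.finrank Fq (LinearMap.ker φ) ≤ k - 1 :=
  twisted_gabidulin_code_MRD_general q n k s h hk1 hgcd Fq K hq hK η hη a ha φ hφ
end
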